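/- arXiv:2304.02303 — 6 statements merged into one kernel-verified Lean document; each statement's English description precedes it below -/
import Mathlib

section
/- Consider a reaction network on n species with m = n+1 reactions, with source matrix A ∈ ℤ^{n×(n+1)} (nonnegative entries) and stoichiometric matrix Γ ∈ ℤ^{n×(n+1)} (with A + Γ entrywise nonnegative), such that Γ has rank n, the network is dynamically nontrivial (there exists v ∈ ℝ^{n+1} with all entries positive and Γv = 0), and the n+1 columns of A are affinely independent in ℝ^n. Then for every vector of positive rate constants κ ∈ ℝ^{n+1}_{>0}, the associated mass-action differential equation ẋ = f(x) has exactly one equilibrium x̄ in the open positive orthant ℝ^n_{>0} (i.e., exactly one x̄ ∈ ℝ^n_{>0} with f(x̄) = 0), and this equilibrium is nondegenerate: the Jacobian matrix Df(x̄) has nonzero determinant. -/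
open scoped BigOperators

/-- The mass-action vector field of a reaction network with source matrix `A`,
stoichiometric matrix `Γ` and rate constants `κ`. -/
noncomputable def massAction {n m : ℕ} (A Γ : Matrix (Fin n) (Fin m) ℤ)
    (κ : Fin m → ℝ) (x : Fin n → ℝ) : Fin n → ℝ :=
  fun i => ∑ j, (Γ i j : ℝ) * κ j * ∏ k, x k ^ (A k j).toNat

/-- The Jacobian matrix of a vector field `f : ℝⁿ → ℝⁿ` at a point `x`. -/
noncomputable def jacobianMatrix {n : ℕ} (f : (Fin n → ℝ) → (Fin n → ℝ))
    (x : Fin n → ℝ) : Matrix (Fin n) (Fin n) ℝ :=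
  Matrix.of fun i k => fderiv ℝ (fun y => f y i) x (Pi.single k 1)

/-!
At a positive state `x` the vector field is `f(x) = G r(x)`, where `G` is `Γ` over `ℝ` and
`r_j(x) = κ_j x^{a_j} > 0` are the reaction rates, `a_j` being the source complexes. Since `G`
has rank `n`, its kernel is a line, spanned by the positive vector `v`. Hence `x` is an
equilibrium iff `r(x) = s v` with `s > 0`, i.e. in logarithmic coordinates `y = log x` iff
`a_j ⬝ y = log (v_j / κ_j) + log s` for all `j`. Affine independence of the `a_j` makes this
system solvable, and determines `y` uniquely, because `a_j ⬝ u` constant in `j` forces `u = 0`.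

The Jacobian factors as `Df(x) = G diag(r(x)) Aᵀ diag(1/x)`. If `G diag(r) Aᵀ u = 0` at an
equilibrium, then `diag(r) Aᵀ u` lies in `ker G = ℝ r`, so again `a_j ⬝ u` is constant in `j`
and `u = 0`.
-/

open Matrix

namespace Matrix

variable {K : Type*} [Field K] {n : ℕ}

theorem eq_zero_of_affineIndependent_of_mulVec_eq_const {B : Matrix (Fin (n + 1)) (Fin n) K}
    (hB : AffineIndependent K B) {u : Fin n → K} {c : K} (hu : ∀ j, (B *ᵥ u) j = c) :
    u = 0 := by
  rw [affineIndependent_iff_linearIndependent_vsub K B 0] at hB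
  have hspan :
      Submodule.span K (Set.range fun j : {j : Fin (n + 1) // j ≠ 0} => B j -ᵥ B 0) = ⊤ :=
    hB.span_eq_top_of_card_eq_finrank' (by simp [Fintype.card_subtype_compl])
  have hu' : ∀ j, B j ⬝ᵥ u = c := hu
  have horth : ∀ z, z ⬝ᵥ u = 0 := fun z =>
    Submodule.span_induction (p := fun z _ => z ⬝ᵥ u = 0)
      (by rintro _ ⟨j, rfl⟩; simp [vsub_eq_sub, sub_dotProduct, hu'])
      (zero_dotProduct u) (fun _ _ _ _ hx hy => by rw [add_dotProduct, hx, hy, add_zero])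
      (fun a _ _ hx => by rw [smul_dotProduct, hx, smul_zero]) (hspan ▸ Submodule.mem_top)
  funext i
  simpa using horth (Pi.single i 1)

theorem exists_mulVec_eq_add_const {B : Matrix (Fin (n + 1)) (Fin n) K}
    (hB : AffineIndependent K B) (c : Fin (n + 1) → K) :
    ∃ y : Fin n → K, ∃ s : K, ∀ j, (B *ᵥ y) j = c j + s := by
  let L : (Fin n → K) →ₗ[K] (Fin n → K) :=
    (LinearMap.pi fun r : Fin n =>
      LinearMap.proj (R := K) (φ := fun _ => K) r.succ - LinearMap.proj 0) ∘ₗ B.mulVecLin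
  have hL : Function.Injective L := by
    rw [← LinearMap.ker_eq_bot, LinearMap.ker_eq_bot']
    intro u hu
    refine eq_zero_of_affineIndependent_of_mulVec_eq_const hB (c := (B *ᵥ u) 0) fun j => ?_
    induction j using Fin.cases with
    | zero => rfl
    | succ r => simpa [L, sub_eq_zero] using congrFun hu r
  obtain ⟨y, hy⟩ := LinearMap.injective_iff_surjective.mp hL fun r => c r.succ - c 0
  refine ⟨y, (B *ᵥ y) 0 - c 0, fun j => ?_⟩
  induction j using Fin.cases with
  | zero => ring
  | succ r =>
    have hr : (B *ᵥ y) r.succ - (B *ᵥ y) 0 = c r.succ - c 0 := congrFun hy r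
    linear_combination hr

theorem exists_eq_smul_of_rank_eq {m : Type*} [Fintype m] {G : Matrix m (Fin (n + 1)) K}
    (hG : G.rank = n) {v w : Fin (n + 1) → K} (hv : v ≠ 0) (hGv : G *ᵥ v = 0)
    (hGw : G *ᵥ w = 0) : ∃ s : K, w = s • v := by
  have hker : Module.finrank K (LinearMap.ker G.mulVecLin) = 1 := by
    have := G.mulVecLin.finrank_range_add_finrank_ker
    simp only [Module.finrank_fin_fun] at this
    rw [← Matrix.rank] at this
    omega
  have hspan : Submodule.span K {v} = LinearMap.ker G.mulVecLin :=
    Submodule.eq_of_le_of_finrank_le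
      ((Submodule.span_singleton_le_iff_mem _ _).mpr hGv) (by rw [hker, finrank_span_singleton hv])
  obtain ⟨s, hs⟩ := Submodule.mem_span_singleton.mp (hspan ▸ hGw : w ∈ Submodule.span K {v})
  exact ⟨s, hs.symm⟩

theorem det_mul_diagonal_mul_ne_zero {G : Matrix (Fin n) (Fin (n + 1)) K} (hG : G.rank = n)
    {w : Fin (n + 1) → K} (hw : ∀ j, w j ≠ 0) (hGw : G *ᵥ w = 0)
    {B : Matrix (Fin (n + 1)) (Fin n) K} (hB : AffineIndependent K B) :
    (G * diagonal w * B).det ≠ 0 := by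
  intro hdet
  obtain ⟨u, hu, hMu⟩ := exists_mulVec_eq_zero_iff.mpr hdet
  rw [← mulVec_mulVec, ← mulVec_mulVec] at hMu
  obtain ⟨s, hs⟩ := exists_eq_smul_of_rank_eq hG (fun h => hw 0 (congrFun h 0)) hGw hMu
  refine hu (eq_zero_of_affineIndependent_of_mulVec_eq_const hB (c := s) fun j => ?_)
  have := congrFun hs j
  simp only [mulVec_diagonal, Pi.smul_apply, smul_eq_mul] at this
  exact mul_left_cancel₀ (hw j) (by rw [this, mul_comm])

end Matrix

theorem Int.cast_toNat_of_nonneg {R : Type*} [Ring R] {z : ℤ} (hz : 0 ≤ z) :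
    ((z.toNat : ℕ) : R) = z := by
  rw [← Int.cast_natCast, Int.toNat_of_nonneg hz]

theorem fderiv_prod_pow_apply_single {ι : Type*} [Fintype ι] [DecidableEq ι] (e : ι → ℕ)
    {x : ι → ℝ} {k : ι} (hxk : x k ≠ 0) :
    fderiv ℝ (fun y : ι → ℝ => ∏ l, y l ^ e l) x (Pi.single k 1) =
      (∏ l, x l ^ e l) * e k / x k := by
  have hderiv := HasFDerivAt.finsetProd (u := Finset.univ)
    (g := fun l (y : ι → ℝ) => y l ^ e l) fun l _ =>
      (hasDerivAt_pow (e l) (x l)).comp_hasFDerivAt x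
        (ContinuousLinearMap.proj (R := ℝ) (φ := fun _ : ι => ℝ) l).hasFDerivAt
  rw [hderiv.fderiv, _root_.sum_apply, Finset.sum_eq_single k (by simp_all) (by simp),
    ← Finset.mul_prod_erase _ _ (Finset.mem_univ k)]
  cases e k with
  | zero => simp
  | succ d =>
    simp only [Nat.cast_add, Nat.cast_one, add_tsub_cancel_right, _root_.smul_apply,
      ContinuousLinearMap.proj_apply, Pi.single_eq_same, smul_eq_mul, mul_one]
    field_simp
    ring

noncomputable def reactionRates {n m : ℕ} (A : Matrix (Fin n) (Fin m) ℤ) (κ : Fin m → ℝ)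
    (x : Fin n → ℝ) : Fin m → ℝ :=
  fun j => κ j * ∏ k, x k ^ (A k j).toNat

section MassAction

variable {n m : ℕ} {A Γ : Matrix (Fin n) (Fin m) ℤ} {κ : Fin m → ℝ} {x : Fin n → ℝ}

theorem massAction_eq_mulVec :
    massAction A Γ κ x = Γ.map (Int.cast : ℤ → ℝ) *ᵥ reactionRates A κ x := by
  funext i
  simp only [massAction, reactionRates, mulVec, dotProduct, map_apply, mul_assoc]

theorem reactionRates_pos (hκ : ∀ j, 0 < κ j) (hx : ∀ k, 0 < x k) (j : Fin m) :
    0 < reactionRates A κ x j :=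
  mul_pos (hκ j) (Finset.prod_pos fun k _ => pow_pos (hx k) _)

theorem reactionRates_eq_exp (hA : ∀ k j, 0 ≤ A k j) (hx : ∀ k, 0 < x k) (j : Fin m) :
    reactionRates A κ x j =
      κ j * Real.exp (((A.map (Int.cast : ℤ → ℝ))ᵀ *ᵥ fun k => Real.log (x k)) j) := by
  simp only [reactionRates, mulVec, dotProduct, transpose_apply, map_apply, Real.exp_sum]
  congr 1
  refine Finset.prod_congr rfl fun k _ => ?_
  rw [← Int.cast_toNat_of_nonneg (hA k j), Real.exp_nat_mul, Real.exp_log (hx k)]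

theorem jacobianMatrix_massAction (hA : ∀ k j, 0 ≤ A k j) (hx : ∀ k, x k ≠ 0) :
    jacobianMatrix (massAction A Γ κ) x =
      Γ.map (Int.cast : ℤ → ℝ) * diagonal (reactionRates A κ x) *
        (A.map (Int.cast : ℤ → ℝ))ᵀ * diagonal fun k => (x k)⁻¹ := by
  ext i k
  have hdiff :
      ∀ j, DifferentiableAt ℝ (fun y : Fin n → ℝ => ∏ l, y l ^ (A l j).toNat) x :=
    fun j => by fun_prop
  rw [mul_diagonal, mul_apply]
  simp only [jacobianMatrix, massAction, of_apply, mul_diagonal, transpose_apply, map_apply]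
  rw [fderiv_fun_sum fun j _ => (hdiff j).const_mul _, _root_.sum_apply, Finset.sum_mul]
  refine Finset.sum_congr rfl fun j _ => ?_
  rw [fderiv_const_mul (hdiff j), _root_.smul_apply, fderiv_prod_pow_apply_single _ (hx k),
    Int.cast_toNat_of_nonneg (hA k j), reactionRates, smul_eq_mul]
  ring

end MassAction

section Equilibria

variable {n : ℕ} {A Γ : Matrix (Fin n) (Fin (n + 1)) ℤ} {κ : Fin (n + 1) → ℝ}

theorem exists_pos_massAction_eq_zero (hA : ∀ k j, 0 ≤ A k j)
    (haff : AffineIndependent ℝ (A.map (Int.cast : ℤ → ℝ))ᵀ) {v : Fin (n + 1) → ℝ}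
    (hv : ∀ j, 0 < v j) (hΓv : Γ.map (Int.cast : ℤ → ℝ) *ᵥ v = 0)
    (hκ : ∀ j, 0 < κ j) :
    ∃ x : Fin n → ℝ, (∀ k, 0 < x k) ∧ massAction A Γ κ x = 0 := by
  obtain ⟨y, s, hy⟩ := exists_mulVec_eq_add_const haff fun j => Real.log (v j / κ j)
  refine ⟨fun k => Real.exp (y k), fun k => Real.exp_pos _, ?_⟩
  have hrates : reactionRates A κ (fun k => Real.exp (y k)) = Real.exp s • v := by
    funext j
    rw [reactionRates_eq_exp hA (fun k => Real.exp_pos _)]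
    simp only [Real.log_exp, hy, Real.exp_add, Real.exp_log (div_pos (hv j) (hκ j)),
      Pi.smul_apply, smul_eq_mul]
    field_simp [(hκ j).ne']
  rw [massAction_eq_mulVec, hrates, mulVec_smul, hΓv, smul_zero]

theorem eq_of_massAction_eq_zero (hA : ∀ k j, 0 ≤ A k j)
    (hrank : (Γ.map (Int.cast : ℤ → ℝ)).rank = n)
    (haff : AffineIndependent ℝ (A.map (Int.cast : ℤ → ℝ))ᵀ) (hκ : ∀ j, 0 < κ j)
    {x x' : Fin n → ℝ} (hx : ∀ k, 0 < x k) (hx' : ∀ k, 0 < x' k)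
    (hfx : massAction A Γ κ x = 0) (hfx' : massAction A Γ κ x' = 0) : x' = x := by
  rw [massAction_eq_mulVec] at hfx hfx'
  obtain ⟨s, hs⟩ := exists_eq_smul_of_rank_eq hrank
    (fun h => (reactionRates_pos hκ hx 0).ne' (congrFun h 0)) hfx hfx'
  have hspos : 0 < s := by
    have := congrFun hs 0
    simp only [Pi.smul_apply, smul_eq_mul] at this
    exact pos_of_mul_pos_left (this ▸ reactionRates_pos hκ hx' 0) (reactionRates_pos hκ hx 0).le
  have hlog : (fun k => Real.log (x' k)) - (fun k => Real.log (x k)) = 0 := by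
    refine eq_zero_of_affineIndependent_of_mulVec_eq_const haff (c := Real.log s) fun j => ?_
    have := congrFun hs j
    simp only [Pi.smul_apply, smul_eq_mul, reactionRates_eq_exp hA hx,
      reactionRates_eq_exp hA hx'] at this
    rw [mulVec_sub, Pi.sub_apply, sub_eq_iff_eq_add, ← Real.exp_eq_exp, Real.exp_add,
      Real.exp_log hspos]
    exact mul_left_cancel₀ (hκ j).ne' (by rw [this]; ring)
  funext k
  simpa [sub_eq_zero, Real.log_injOn_pos.eq_iff (hx' k) (hx k)] using congrFun hlog k

theorem det_jacobianMatrix_massAction_ne_zero (hA : ∀ k j, 0 ≤ A k j)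
    (hrank : (Γ.map (Int.cast : ℤ → ℝ)).rank = n)
    (haff : AffineIndependent ℝ (A.map (Int.cast : ℤ → ℝ))ᵀ) (hκ : ∀ j, 0 < κ j)
    {x : Fin n → ℝ} (hx : ∀ k, 0 < x k) (hfx : massAction A Γ κ x = 0) :
    (jacobianMatrix (massAction A Γ κ) x).det ≠ 0 := by
  rw [jacobianMatrix_massAction hA fun k => (hx k).ne', det_mul, det_diagonal]
  refine mul_ne_zero (det_mul_diagonal_mul_ne_zero hrank
    (fun j => (reactionRates_pos hκ hx j).ne') (massAction_eq_mulVec ▸ hfx) haff) ?_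
  exact Finset.prod_ne_zero_iff.mpr fun k _ => inv_ne_zero (hx k).ne'

end Equilibria

theorem stmt8_general (n : ℕ)
    (A Γ : Matrix (Fin n) (Fin (n + 1)) ℤ)
    (hA : ∀ i j, 0 ≤ A i j)
    (hrank : (Γ.map (fun z : ℤ => (z : ℝ))).rank = n)
    (hdnt : ∃ v : Fin (n + 1) → ℝ, (∀ j, 0 < v j) ∧
      (Γ.map (fun z : ℤ => (z : ℝ))).mulVec v = 0)
    (haff : AffineIndependent ℝ (fun j : Fin (n + 1) => fun i : Fin n => (A i j : ℝ)))
    (κ : Fin (n + 1) → ℝ) (hκ : ∀ j, 0 < κ j) :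
    ∃ xbar : Fin n → ℝ,
      ((∀ i, 0 < xbar i) ∧ massAction A Γ κ xbar = 0) ∧
      (∀ x' : Fin n → ℝ, (∀ i, 0 < x' i) → massAction A Γ κ x' = 0 → x' = xbar) ∧
      (jacobianMatrix (massAction A Γ κ) xbar).det ≠ 0 := by
  obtain ⟨v, hv, hΓv⟩ := hdnt
  obtain ⟨xbar, hpos, hfx⟩ := exists_pos_massAction_eq_zero hA haff hv hΓv hκ
  exact ⟨xbar, ⟨hpos, hfx⟩,
    fun _ hx' hfx' => eq_of_massAction_eq_zero hA hrank haff hκ hpos hx' hfx hfx',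
    det_jacobianMatrix_massAction_ne_zero hA hrank haff hκ hpos hfx⟩

/-- A dynamically nontrivial `(n, n+1, n)` network with affinely independent source
complexes has, for every choice of positive rate constants, a unique positive
equilibrium, and this equilibrium is nondegenerate. -/
theorem stmt8 (n : ℕ)
    (A Γ : Matrix (Fin n) (Fin (n + 1)) ℤ)
    (hA : ∀ i j, 0 ≤ A i j)
    (hAΓ : ∀ i j, 0 ≤ A i j + Γ i j)
    (hrank : (Γ.map (fun z : ℤ => (z : ℝ))).rank = n)
    (hdnt : ∃ v : Fin (n + 1) → ℝ, (∀ j, 0 < v j) ∧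
      (Γ.map (fun z : ℤ => (z : ℝ))).mulVec v = 0)
    (haff : AffineIndependent ℝ (fun j : Fin (n + 1) => fun i : Fin n => (A i j : ℝ)))
    (κ : Fin (n + 1) → ℝ) (hκ : ∀ j, 0 < κ j) :
    ∃ xbar : Fin n → ℝ,
      ((∀ i, 0 < xbar i) ∧ massAction A Γ κ xbar = 0) ∧
      (∀ x' : Fin n → ℝ, (∀ i, 0 < x' i) → massAction A Γ κ x' = 0 → x' = xbar) ∧
      (jacobianMatrix (massAction A Γ κ) xbar).det ≠ 0 :=
  stmt8_general n A Γ hA hrank hdnt haff κ hκ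
end

section
/- Consider a reaction network on n species with m = n+1 reactions, with source matrix A ∈ ℤ^{n×(n+1)} (nonnegative entries) and stoichiometric matrix Γ ∈ ℤ^{n×(n+1)} (with A + Γ entrywise nonnegative), such that Γ has rank n, the network is dynamically nontrivial (there exists v ∈ ℝ^{n+1} with all entries positive and Γv = 0), and the n+1 columns of A are affinely dependent in ℝ^n. Then for every vector of positive rate constants κ ∈ ℝ^{n+1}_{>0}, the associated mass-action differential equation ẋ = f(x) has no isolated equilibrium in the open positive orthant: for every x̄ ∈ ℝ^n_{>0} with f(x̄) = 0 and every ε > 0 there exists x' ∈ ℝ^n_{>0} with x' ≠ x̄, f(x') = 0, and |x' − x̄| < ε. -/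
open scoped BigOperators

/-- From affine dependence of the columns of `A`, there is a nonzero `u` with all
`A_j · u` equal. -/
lemma exists_ortho {n : ℕ} (A : Matrix (Fin n) (Fin (n + 1)) ℤ)
    (haff : ¬ AffineIndependent ℝ (fun j : Fin (n + 1) => fun i : Fin n => (A i j : ℝ))) :
    ∃ u : Fin n → ℝ, u ≠ 0 ∧ ∀ j, ∑ i, (A i j : ℝ) * u i = ∑ i, (A i 0 : ℝ) * u i := by
  classical
  -- get a nontrivial affine dependence
  rw [affineIndependent_iff] at haff
  push_neg at haff
  obtain ⟨s, w0, hw0sum, hw0comb, e0, he0s, he0⟩ := haff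
  set w : Fin (n + 1) → ℝ := fun j => if j ∈ s then w0 j else 0 with hw
  have hwsum : ∑ j, w j = 0 := by
    rw [hw, Finset.sum_ite_mem, Finset.univ_inter, hw0sum]
  have hwcomb : ∀ i : Fin n, ∑ j, w j * (A i j : ℝ) = 0 := by
    intro i
    have := congrFun hw0comb i
    simp only [Finset.sum_apply, Pi.smul_apply, smul_eq_mul, Pi.zero_apply] at this
    simp only [hw, ite_mul, zero_mul, Finset.sum_ite_mem, Finset.univ_inter]
    exact this
  have hwne : w e0 ≠ 0 := by simp [hw, he0s, he0]
  set D : Matrix (Fin n) (Fin n) ℝ := fun i j => (A i j.succ : ℝ) - (A i 0 : ℝ) with hD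
  have hdet : D.det = 0 := by
    rw [← Matrix.exists_mulVec_eq_zero_iff]
    refine ⟨fun j => w j.succ, ?_, ?_⟩
    · intro h
      have hz : ∀ j : Fin n, w j.succ = 0 := fun j => congrFun h j
      have h0 : w 0 = 0 := by
        have := hwsum
        rw [Fin.sum_univ_succ] at this
        simpa [hz] using this
      rcases Fin.eq_zero_or_eq_succ e0 with h | ⟨j, rfl⟩
      · exact hwne (h ▸ h0)
      · exact hwne (hz j)
    · funext i
      have h1 := hwcomb i
      rw [Fin.sum_univ_succ] at h1
      have h2 : ∑ j : Fin n, w j.succ = - w 0 := by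
        have := hwsum
        rw [Fin.sum_univ_succ] at this
        linarith
      simp only [Matrix.mulVec, dotProduct, hD, Pi.zero_apply]
      have : ∑ j : Fin n, ((A i j.succ : ℝ) - (A i 0 : ℝ)) * w j.succ
          = ∑ j : Fin n, w j.succ * (A i j.succ : ℝ) - (∑ j : Fin n, w j.succ) * (A i 0 : ℝ) := by
        rw [Finset.sum_mul, ← Finset.sum_sub_distrib]
        exact Finset.sum_congr rfl fun j _ => by ring
      rw [this, h2]
      linarith
  obtain ⟨u, hu, huD⟩ := Matrix.exists_vecMul_eq_zero_iff.mpr hdet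
  refine ⟨u, hu, ?_⟩
  intro j
  rcases Fin.eq_zero_or_eq_succ j with rfl | ⟨j, rfl⟩
  · rfl
  · have := congrFun huD j
    simp only [Matrix.vecMul, dotProduct, hD, Pi.zero_apply] at this
    have h3 : ∑ i, u i * ((A i j.succ : ℝ) - (A i 0 : ℝ))
        = ∑ i, (A i j.succ : ℝ) * u i - ∑ i, (A i 0 : ℝ) * u i := by
      rw [← Finset.sum_sub_distrib]; exact Finset.sum_congr rfl fun i _ => by ring
    rw [h3] at this
    linarith

/-- A dynamically nontrivial `(n, n+1, n)` network with affinely dependent source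
complexes has, for every choice of positive rate constants, no isolated positive
equilibrium. -/
theorem stmt9 (n : ℕ)
    (A Γ : Matrix (Fin n) (Fin (n + 1)) ℤ)
    (hA : ∀ i j, 0 ≤ A i j)
    (hAΓ : ∀ i j, 0 ≤ A i j + Γ i j)
    (hrank : (Γ.map (fun z : ℤ => (z : ℝ))).rank = n)
    (hdnt : ∃ v : Fin (n + 1) → ℝ, (∀ j, 0 < v j) ∧
      (Γ.map (fun z : ℤ => (z : ℝ))).mulVec v = 0)
    (haff : ¬ AffineIndependent ℝ (fun j : Fin (n + 1) => fun i : Fin n => (A i j : ℝ)))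
    (κ : Fin (n + 1) → ℝ) (hκ : ∀ j, 0 < κ j) :
    ∀ xbar : Fin n → ℝ, (∀ i, 0 < xbar i) → massAction A Γ κ xbar = 0 →
      ∀ ε > 0, ∃ x' : Fin n → ℝ,
        (∀ i, 0 < x' i) ∧ x' ≠ xbar ∧ massAction A Γ κ x' = 0 ∧ dist x' xbar < ε := by
  obtain ⟨u, hu, hc⟩ := exists_ortho A haff
  intro xbar hxpos heq ε hε
  obtain ⟨i0, hi0⟩ := Function.ne_iff.mp hu
  -- the curve of equilibria
  set g : ℝ → Fin n → ℝ := fun s i => xbar i * Real.exp (s * u i) with hg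
  have hg0 : g 0 = xbar := by funext i; simp [hg]
  have hgeq : ∀ s, massAction A Γ κ (g s) = 0 := by
    intro s
    funext i
    have key : ∀ j, (∏ k, g s k ^ (A k j).toNat)
        = (∏ k, xbar k ^ (A k j).toNat) * Real.exp (s * ∑ k, (A k 0 : ℝ) * u k) := by
      intro j
      have : ∀ k, g s k ^ (A k j).toNat
          = xbar k ^ (A k j).toNat * Real.exp (((A k j).toNat : ℝ) * (s * u k)) := by
        intro k
        rw [hg]
        rw [mul_pow, Real.exp_nat_mul]
      rw [Finset.prod_congr rfl fun k _ => this k, Finset.prod_mul_distrib,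
        ← Real.exp_sum]
      congr 2
      have : ∀ k, ((A k j).toNat : ℝ) * (s * u k) = s * ((A k j : ℝ) * u k) := by
        intro k
        have : ((A k j).toNat : ℝ) = (A k j : ℝ) := by
          rw [← Int.cast_natCast, Int.toNat_of_nonneg (hA k j)]
        rw [this]; ring
      rw [Finset.sum_congr rfl fun k _ => this k, ← Finset.mul_sum, hc j]
    have hMA := congrFun heq i
    simp only [massAction, Pi.zero_apply] at hMA ⊢
    calc ∑ j, (Γ i j : ℝ) * κ j * ∏ k, g s k ^ (A k j).toNat
        = ∑ j, ((Γ i j : ℝ) * κ j * ∏ k, xbar k ^ (A k j).toNat)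
            * Real.exp (s * ∑ k, (A k 0 : ℝ) * u k) := by
          exact Finset.sum_congr rfl fun j _ => by rw [key j]; ring
      _ = (∑ j, (Γ i j : ℝ) * κ j * ∏ k, xbar k ^ (A k j).toNat)
            * Real.exp (s * ∑ k, (A k 0 : ℝ) * u k) := by rw [Finset.sum_mul]
      _ = 0 := by rw [hMA, zero_mul]
  -- continuity at 0
  have hgcont : Continuous g := by
    apply continuous_pi
    intro i
    exact continuous_const.mul ((continuous_id.mul continuous_const).rexp)
  have hca : ContinuousAt g 0 := hgcont.continuousAt
  rw [Metric.continuousAt_iff] at hca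
  obtain ⟨δ, hδ, hδ'⟩ := hca ε hε
  refine ⟨g (δ / 2), ?_, ?_, hgeq _, ?_⟩
  · intro i
    exact mul_pos (hxpos i) (Real.exp_pos _)
  · intro h
    have := congrFun h i0
    simp only [hg] at this
    rcases mul_right_eq_self₀.mp this with h | h
    · rw [Real.exp_eq_one_iff] at h
      rcases mul_eq_zero.mp h with h' | h'
      · linarith
      · exact hi0 h'
    · exact (ne_of_gt (hxpos i0)) h
  · have := hδ' (x := δ / 2) (by rw [Real.dist_eq]; rw [sub_zero, abs_of_pos (by linarith)]; linarith)
    rwa [hg0] at this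
end

section
/- Let n ≥ 5 and consider a reaction network on n species with 3 reactions, with source matrix A ∈ ℤ^{n×3} (nonnegative entries) and stoichiometric matrix Γ ∈ ℤ^{n×3} (with A + Γ entrywise nonnegative), such that Γ has rank 2, the network is quadratic (every column of A has entry sum at most 2), no species is trivial (for every i there is some j with Γ_{ij} ≠ 0), and some reaction is 2X_i → 3X_i for some species i (some column of A equals 2e_i with the corresponding column of Γ equal to e_i). Then the network is dynamically trivial: there is no v ∈ ℝ^3 with all entries positive such that Γv = 0. -/
/-! Since `Γ v = 0` with `v > 0`, every row of `Γ` that is not zero, hence every row, has a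
negative entry. A negative entry `Γ k j` forces `A k j ≥ 1` because `A + Γ ≥ 0`, so a quadratic
column has at most two negative entries, and the column of `2Xᵢ → 3Xᵢ` has none. The two other
columns thus cover at most four species, while there are at least five. -/

open Finset Matrix

lemma exists_neg_of_mulVec_eq_zero {R ι κ : Type*} [Field R] [LinearOrder R]
    [IsStrictOrderedRing R] [Fintype κ] {M : Matrix ι κ R} {v : κ → R}
    (hv : ∀ j, 0 < v j) (hMv : M *ᵥ v = 0) {k : ι} (hk : ∃ j, M k j ≠ 0) :
    ∃ j, M k j < 0 := by
  by_contra! hnonneg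
  obtain ⟨j, hj⟩ := hk
  have hrow : ∑ j, M k j * v j = 0 := congrFun hMv k
  have hterm := (sum_eq_zero_iff_of_nonneg fun j _ =>
    mul_nonneg (hnonneg j) (hv j).le).mp hrow j (mem_univ j)
  exact hj ((mul_eq_zero.mp hterm).resolve_right (hv j).ne')

lemma card_filter_neg_le_sum {ι : Type*} [Fintype ι] {a γ : ι → ℤ} (ha : ∀ k, 0 ≤ a k)
    (haγ : ∀ k, 0 ≤ a k + γ k) : (#{k | γ k < 0} : ℤ) ≤ ∑ k, a k := by
  have hone : ∀ k ∈ ({k | γ k < 0} : Finset ι), 1 ≤ a k := fun k hk => by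
    have := (mem_filter.mp hk).2
    linarith [haγ k]
  calc (#{k | γ k < 0} : ℤ) = ∑ k ∈ {k | γ k < 0}, 1 := by simp
    _ ≤ ∑ k ∈ {k | γ k < 0}, a k := sum_le_sum hone
    _ ≤ ∑ k, a k := sum_le_sum_of_subset_of_nonneg (subset_univ _) fun k _ _ => ha k

lemma card_le_sum_card_filter_neg {R ι κ : Type*} [Zero R] [LT R] [DecidableLT R]
    [Fintype ι] [DecidableEq ι] {M : Matrix ι κ R} (s : Finset κ) (hneg : ∀ k, ∃ j ∈ s, M k j < 0) :
    Fintype.card ι ≤ ∑ j ∈ s, #{k | M k j < 0} := by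
  have hcover : univ ⊆ s.biUnion fun j => ({k | M k j < 0} : Finset ι) := fun k _ => by
    obtain ⟨j, hj, hkj⟩ := hneg k
    exact mem_biUnion.mpr ⟨j, hj, by simpa using hkj⟩
  exact (card_le_card hcover).trans card_biUnion_le

theorem stmt13_general (n : ℕ) (hn : 5 ≤ n)
    (A Γ : Matrix (Fin n) (Fin 3) ℤ)
    (hA : ∀ i j, 0 ≤ A i j)
    (hAΓ : ∀ i j, 0 ≤ A i j + Γ i j)
    (hquad : ∀ j, (∑ i, A i j) ≤ 2)
    (hnontriv : ∀ i, ∃ j, Γ i j ≠ 0)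
    (hauto : ∃ (i : Fin n) (j : Fin 3), (∀ k, A k j = if k = i then 2 else 0) ∧
      (∀ k, Γ k j = if k = i then 1 else 0)) :
    ¬ ∃ v : Fin 3 → ℝ, (∀ j, 0 < v j) ∧
      (Γ.map (fun z : ℤ => (z : ℝ))).mulVec v = 0 := by
  rintro ⟨v, hv, hΓv⟩
  obtain ⟨i, j₀, -, hΓj₀⟩ := hauto
  have hneg : ∀ k, ∃ j ∈ univ.erase j₀, Γ k j < 0 := fun k => by
    obtain ⟨j, hj⟩ := exists_neg_of_mulVec_eq_zero hv hΓv
      (by simpa using hnontriv k : ∃ j, Γ.map (fun z : ℤ => (z : ℝ)) k j ≠ 0)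
    have hj : Γ k j < 0 := by simpa using hj
    refine ⟨j, mem_erase.mpr ⟨?_, mem_univ j⟩, hj⟩
    rintro rfl
    rw [hΓj₀ k] at hj
    split_ifs at hj <;> omega
  have hcol : ∀ j, #{k | Γ k j < 0} ≤ 2 := fun j => by
    have := (card_filter_neg_le_sum (hA · j) (hAΓ · j)).trans (hquad j)
    omega
  have hcount := (card_le_sum_card_filter_neg _ hneg).trans
    (sum_le_card_nsmul _ _ 2 fun j _ => hcol j)
  rw [card_erase_of_mem (mem_univ j₀), card_univ, Fintype.card_fin, Fintype.card_fin,
    smul_eq_mul] at hcount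
  omega

/-- For `n ≥ 5`, any quadratic `(n,3)` network of rank two without trivial species
containing a reaction `2Xᵢ → 3Xᵢ` is dynamically trivial. -/
theorem stmt13 (n : ℕ) (hn : 5 ≤ n)
    (A Γ : Matrix (Fin n) (Fin 3) ℤ)
    (hA : ∀ i j, 0 ≤ A i j)
    (hAΓ : ∀ i j, 0 ≤ A i j + Γ i j)
    (hrank : (Γ.map (fun z : ℤ => (z : ℝ))).rank = 2)
    (hquad : ∀ j, (∑ i, A i j) ≤ 2)
    (hnontriv : ∀ i, ∃ j, Γ i j ≠ 0)
    (hauto : ∃ (i : Fin n) (j : Fin 3), (∀ k, A k j = if k = i then 2 else 0) ∧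
      (∀ k, Γ k j = if k = i then 1 else 0)) :
    ¬ ∃ v : Fin 3 → ℝ, (∀ j, 0 < v j) ∧
      (Γ.map (fun z : ℤ => (z : ℝ))).mulVec v = 0 :=
  stmt13_general n hn A Γ hA hAΓ hquad hnontriv hauto
end

section
/- Let κ_1, κ_2, κ_3 > 0 be real numbers and let d ≥ 1 be an integer. Consider the planar differential equation ẋ = κ_1 x² − κ_2 xy, ẏ = dκ_2 xy − κ_3 y. Then (x̄, ȳ) = (κ_3/(dκ_2), κ_1κ_3/(dκ_2²)) is the unique equilibrium in the open positive quadrant ℝ^2_{>0}; writing J for the Jacobian matrix of the vector field at (x̄, ȳ), one has det J > 0 and tr J > 0; and the system has no periodic orbit in ℝ^2_{≥0}, i.e., there is no nonconstant differentiable T-periodic function (x,y) : ℝ → ℝ^2_{≥0} (T > 0) solving the equation. -/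
/-!
At the equilibrium the Jacobian entry `∂ẏ/∂y = dκ₂x̄ − κ₃` vanishes, so `det J = κ₂x̄ · dκ₂ȳ`
and `tr J = 2κ₁x̄ − κ₂ȳ = κ₁x̄`, both positive.

Both axes are invariant, since `ẋ = x (κ₁x − κ₂y)` and `ẏ = y (dκ₂x − κ₃)`: a coordinate that
vanishes once vanishes identically. On the `y`-axis `−y` and on the `x`-axis `x` are
nondecreasing, and a monotone periodic function is constant, which forces the orbit to the
origin. In the open quadrant the function `V = d x − (κ₃/κ₂) log x + y − ȳ log y` satisfies
`V̇ = dκ₁ (x − x̄)² ≥ 0`, so `V` is constant along a periodic orbit, whence `x ≡ x̄` and then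
`y ≡ ȳ`.
-/

open Function Real

theorem Function.Periodic.eq_of_monotone {α β : Type*} [AddCommGroup α] [LinearOrder α]
    [IsOrderedAddMonoid α] [Archimedean α] [PartialOrder β] {f : α → β} {c : α}
    (hp : Periodic f c) (hc : c ≠ 0) (hf : Monotone f) (a b : α) : f a = f b := by
  wlog hc' : 0 < c generalizing c
  · exact this hp.neg (neg_ne_zero.2 hc) (neg_pos.2 (lt_of_le_of_ne (not_lt.1 hc') hc))
  have hle : ∀ a b, f a ≤ f b := fun a b => by
    obtain ⟨n, hn⟩ := Archimedean.arch (a - b) hc'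
    calc f a ≤ f (b + n • c) := hf (sub_le_iff_le_add'.1 hn)
      _ = f b := hp.nsmul n b
  exact le_antisymm (hle a b) (hle b a)

theorem Function.Periodic.hasDerivAt_eq_zero_of_nonneg {f f' : ℝ → ℝ} {c : ℝ}
    (hp : Periodic f c) (hc : c ≠ 0) (hf : ∀ t, HasDerivAt f (f' t) t) (hf' : ∀ t, 0 ≤ f' t)
    (t : ℝ) : f' t = 0 := by
  have hconst : f = fun _ => f t :=
    funext fun s => hp.eq_of_monotone hc (monotone_of_hasDerivAt_nonneg hf hf') s t
  have h0 : HasDerivAt f 0 t := by rw [hconst]; exact hasDerivAt_const t (f t)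
  exact (hf t).unique h0

theorem eq_zero_of_hasDerivAt_mul_of_eq_zero {f g : ℝ → ℝ} (hg : Continuous g)
    (hf : ∀ t, HasDerivAt f (f t * g t) t) {t₀ : ℝ} (h₀ : f t₀ = 0) (t : ℝ) : f t = 0 := by
  set G : ℝ → ℝ := fun t => ∫ s in t₀..t, g s
  have hG : ∀ t, HasDerivAt G (g t) t := fun t => (hg.integral_hasStrictDerivAt t₀ t).hasDerivAt
  have hconst : ∀ t, HasDerivAt (fun t => f t * exp (-G t)) 0 t := fun t =>
    ((hf t).mul (hG t).neg.exp).congr_deriv (by ring)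
  have := is_const_of_deriv_eq_zero (fun t => (hconst t).differentiableAt)
    (fun t => (hconst t).deriv) t t₀
  simpa [h₀, exp_ne_zero] using this

section LotkaVolterraAutocatalator

variable {κ₁ κ₂ κ₃ d : ℝ} {x y : ℝ → ℝ}

theorem lva_equilibrium_iff (hκ₂ : κ₂ ≠ 0) (hd : d ≠ 0) {p q : ℝ} (hp : 0 < p) (hq : 0 < q) :
    (κ₁ * p ^ 2 - κ₂ * p * q = 0 ∧ d * κ₂ * p * q - κ₃ * q = 0) ↔
      p = κ₃ / (d * κ₂) ∧ q = κ₁ * κ₃ / (d * κ₂ ^ 2) := by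
  have h₁ : κ₁ * p ^ 2 - κ₂ * p * q = p * (κ₁ * p - κ₂ * q) := by ring
  have h₂ : d * κ₂ * p * q - κ₃ * q = q * (d * κ₂ * p - κ₃) := by ring
  rw [h₁, h₂, mul_eq_zero, mul_eq_zero, or_iff_right hp.ne', or_iff_right hq.ne', sub_eq_zero,
    sub_eq_zero]
  constructor
  · rintro ⟨e₁, e₂⟩
    have hp' : p = κ₃ / (d * κ₂) := by rw [← e₂]; field_simp
    refine ⟨hp', ?_⟩
    rw [hp'] at e₁
    field_simp at e₁ ⊢
    linarith
  · rintro ⟨rfl, rfl⟩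
    constructor <;> field_simp

theorem lva_jacobian_det_pos_and_trace_pos (hκ₁ : 0 < κ₁) (hκ₂ : 0 < κ₂) (hκ₃ : 0 < κ₃)
    (hd : 0 < d) :
    let xb : ℝ := κ₃ / (d * κ₂)
    let yb : ℝ := κ₁ * κ₃ / (d * κ₂ ^ 2)
    let J₁₁ : ℝ := deriv (fun s => κ₁ * s ^ 2 - κ₂ * s * yb) xb
    let J₁₂ : ℝ := deriv (fun s => κ₁ * xb ^ 2 - κ₂ * xb * s) yb
    let J₂₁ : ℝ := deriv (fun s => d * κ₂ * s * yb - κ₃ * yb) xb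
    let J₂₂ : ℝ := deriv (fun s => d * κ₂ * xb * s - κ₃ * s) yb
    0 < J₁₁ * J₂₂ - J₁₂ * J₂₁ ∧ 0 < J₁₁ + J₂₂ := by
  intro xb yb J₁₁ J₁₂ J₂₁ J₂₂
  have hJ₁₁ : J₁₁ = κ₁ * xb := by
    rw [show J₁₁ = _ from deriv_fun_sub (by fun_prop) (by fun_prop)]
    simp [xb, yb]; field_simp; ring
  have hJ₁₂ : J₁₂ = -(κ₂ * xb) := by
    rw [show J₁₂ = _ from deriv_fun_sub (by fun_prop) (by fun_prop)]; simp
  have hJ₂₁ : J₂₁ = d * κ₂ * yb := by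
    rw [show J₂₁ = _ from deriv_fun_sub (by fun_prop) (by fun_prop)]; simp
  have hJ₂₂ : J₂₂ = 0 := by
    rw [show J₂₂ = _ from deriv_fun_sub (by fun_prop) (by fun_prop)]; simp [xb]; field_simp; ring
  rw [hJ₁₁, hJ₁₂, hJ₂₁, hJ₂₂]
  constructor <;> norm_num <;> positivity

theorem lva_eq_zero_of_x_eq_zero (hκ₃ : 0 < κ₃) {T : ℝ} (hT : T ≠ 0) (hyT : Periodic y T)
    (hy₀ : ∀ t, 0 ≤ y t) (hx : ∀ t, HasDerivAt x (κ₁ * x t ^ 2 - κ₂ * x t * y t) t)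
    (hy : ∀ t, HasDerivAt y (d * κ₂ * x t * y t - κ₃ * y t) t) {t₀ : ℝ} (h₀ : x t₀ = 0)
    (t : ℝ) : x t = 0 ∧ y t = 0 := by
  have hxc : Continuous x := continuous_iff_continuousAt.2 fun t => (hx t).continuousAt
  have hyc : Continuous y := continuous_iff_continuousAt.2 fun t => (hy t).continuousAt
  have hx_zero : ∀ t, x t = 0 := eq_zero_of_hasDerivAt_mul_of_eq_zero
    (g := fun t => κ₁ * x t - κ₂ * y t) (by fun_prop) (fun t => (hx t).congr_deriv (by ring)) h₀
  have hy' : ∀ t, HasDerivAt (fun t => -y t) (κ₃ * y t) t := fun t =>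
    (hy t).neg.congr_deriv (by rw [hx_zero t]; ring)
  have hyT' : Periodic (fun t => -y t) T := fun t => congrArg Neg.neg (hyT t)
  have := hyT'.hasDerivAt_eq_zero_of_nonneg hT hy' (fun t => mul_nonneg hκ₃.le (hy₀ t)) t
  exact ⟨hx_zero t, (mul_eq_zero.1 this).resolve_left hκ₃.ne'⟩

theorem lva_eq_zero_of_y_eq_zero (hκ₁ : 0 < κ₁) {T : ℝ} (hT : T ≠ 0) (hxT : Periodic x T)
    (hx : ∀ t, HasDerivAt x (κ₁ * x t ^ 2 - κ₂ * x t * y t) t)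
    (hy : ∀ t, HasDerivAt y (d * κ₂ * x t * y t - κ₃ * y t) t) {t₀ : ℝ} (h₀ : y t₀ = 0)
    (t : ℝ) : x t = 0 ∧ y t = 0 := by
  have hxc : Continuous x := continuous_iff_continuousAt.2 fun t => (hx t).continuousAt
  have hy_zero : ∀ t, y t = 0 := eq_zero_of_hasDerivAt_mul_of_eq_zero
    (g := fun t => d * κ₂ * x t - κ₃) (by fun_prop) (fun t => (hy t).congr_deriv (by ring)) h₀
  have hx' : ∀ t, HasDerivAt x (κ₁ * x t ^ 2) t := fun t =>
    (hx t).congr_deriv (by rw [hy_zero t]; ring)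
  have := hxT.hasDerivAt_eq_zero_of_nonneg hT hx' (fun t => by positivity) t
  exact ⟨pow_eq_zero_iff two_ne_zero |>.1 ((mul_eq_zero.1 this).resolve_left hκ₁.ne'),
    hy_zero t⟩

noncomputable def lvaLyapunov (κ₁ κ₂ κ₃ d p q : ℝ) : ℝ :=
  d * p - κ₃ / κ₂ * log p + q - κ₁ * κ₃ / (d * κ₂ ^ 2) * log q

theorem hasDerivAt_lvaLyapunov (hκ₂ : κ₂ ≠ 0) (hd : d ≠ 0) {t : ℝ} (hxt : 0 < x t)
    (hyt : 0 < y t) (hx : HasDerivAt x (κ₁ * x t ^ 2 - κ₂ * x t * y t) t)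
    (hy : HasDerivAt y (d * κ₂ * x t * y t - κ₃ * y t) t) :
    HasDerivAt (fun t => lvaLyapunov κ₁ κ₂ κ₃ d (x t) (y t))
      (d * κ₁ * (x t - κ₃ / (d * κ₂)) ^ 2) t := by
  have hV := (((hx.const_mul d).sub ((hx.log hxt.ne').const_mul (κ₃ / κ₂))).add hy).sub
    ((hy.log hyt.ne').const_mul (κ₁ * κ₃ / (d * κ₂ ^ 2)))
  refine hV.congr_deriv ?_
  have := hxt.ne'
  have := hyt.ne'
  field_simp
  ring

theorem lva_eq_equilibrium_of_pos (hκ₁ : 0 < κ₁) (hκ₂ : 0 < κ₂) (hd : 0 < d) {T : ℝ}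
    (hT : T ≠ 0) (hxT : Periodic x T) (hyT : Periodic y T) (hx₀ : ∀ t, 0 < x t)
    (hy₀ : ∀ t, 0 < y t) (hx : ∀ t, HasDerivAt x (κ₁ * x t ^ 2 - κ₂ * x t * y t) t)
    (hy : ∀ t, HasDerivAt y (d * κ₂ * x t * y t - κ₃ * y t) t) (t : ℝ) :
    x t = κ₃ / (d * κ₂) ∧ y t = κ₁ * κ₃ / (d * κ₂ ^ 2) := by
  have hVT : Periodic (fun t => lvaLyapunov κ₁ κ₂ κ₃ d (x t) (y t)) T := fun t => by
    simp only [hxT t, hyT t]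
  have hx_eq : ∀ t, x t = κ₃ / (d * κ₂) := fun t => by
    have hV' := hVT.hasDerivAt_eq_zero_of_nonneg hT
      (fun t => hasDerivAt_lvaLyapunov hκ₂.ne' hd.ne' (hx₀ t) (hy₀ t) (hx t) (hy t))
      (fun t => by positivity) t
    have := pow_eq_zero_iff two_ne_zero |>.1
      ((mul_eq_zero.1 hV').resolve_left (mul_pos hd hκ₁).ne')
    linarith
  have hx' : HasDerivAt x 0 t := by rw [funext hx_eq]; exact hasDerivAt_const t _
  refine (lva_equilibrium_iff hκ₂.ne' hd.ne' (hx₀ t) (hy₀ t)).1 ⟨(hx t).unique hx', ?_⟩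
  rw [hx_eq t]
  field_simp
  ring

theorem lva_periodic_solution_eq_equilibrium (hκ₁ : 0 < κ₁) (hκ₂ : 0 < κ₂) (hκ₃ : 0 < κ₃)
    (hd : 0 < d) {T : ℝ} (hT : T ≠ 0) (hxT : Periodic x T) (hyT : Periodic y T)
    (hx₀ : ∀ t, 0 ≤ x t) (hy₀ : ∀ t, 0 ≤ y t)
    (hx : ∀ t, HasDerivAt x (κ₁ * x t ^ 2 - κ₂ * x t * y t) t)
    (hy : ∀ t, HasDerivAt y (d * κ₂ * x t * y t - κ₃ * y t) t) :
    (∀ t, x t = 0 ∧ y t = 0) ∨ ∀ t, x t = κ₃ / (d * κ₂) ∧ y t = κ₁ * κ₃ / (d * κ₂ ^ 2) := by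
  by_cases hx_zero : ∃ t₀, x t₀ = 0
  · obtain ⟨t₀, h₀⟩ := hx_zero
    exact Or.inl (lva_eq_zero_of_x_eq_zero hκ₃ hT hyT hy₀ hx hy h₀)
  by_cases hy_zero : ∃ t₀, y t₀ = 0
  · obtain ⟨t₀, h₀⟩ := hy_zero
    exact Or.inl (lva_eq_zero_of_y_eq_zero hκ₁ hT hxT hx hy h₀)
  push Not at hx_zero hy_zero
  exact Or.inr (lva_eq_equilibrium_of_pos hκ₁ hκ₂ hd hT hxT hyT
    (fun t => (hx₀ t).lt_of_ne' (hx_zero t)) (fun t => (hy₀ t).lt_of_ne' (hy_zero t)) hx hy)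

end LotkaVolterraAutocatalator

/-- For the generalised Lotka–Volterra–Autocatalator mass-action system
`ẋ = κ₁x² − κ₂xy`, `ẏ = dκ₂xy − κ₃y` (with `d ≥ 1` an integer and positive rate
constants): `(κ₃/(dκ₂), κ₁κ₃/(dκ₂²))` is the unique equilibrium in the open
positive quadrant, the Jacobian there has positive determinant and positive
trace, and there is no periodic orbit in the closed nonnegative quadrant. -/
theorem stmt16 (κ₁ κ₂ κ₃ : ℝ) (hκ₁ : 0 < κ₁) (hκ₂ : 0 < κ₂) (hκ₃ : 0 < κ₃)
    (d : ℤ) (hd : 1 ≤ d) :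
    -- unique positive equilibrium
    (∀ p : ℝ × ℝ, 0 < p.1 → 0 < p.2 →
      ((κ₁ * p.1 ^ 2 - κ₂ * p.1 * p.2 = 0 ∧
        (d : ℝ) * κ₂ * p.1 * p.2 - κ₃ * p.2 = 0) ↔
        p = (κ₃ / ((d : ℝ) * κ₂), κ₁ * κ₃ / ((d : ℝ) * κ₂ ^ 2)))) ∧
    -- det J > 0 and tr J > 0 at the equilibrium
    (let xb : ℝ := κ₃ / ((d : ℝ) * κ₂)
     let yb : ℝ := κ₁ * κ₃ / ((d : ℝ) * κ₂ ^ 2)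
     let J₁₁ : ℝ := deriv (fun s => κ₁ * s ^ 2 - κ₂ * s * yb) xb
     let J₁₂ : ℝ := deriv (fun s => κ₁ * xb ^ 2 - κ₂ * xb * s) yb
     let J₂₁ : ℝ := deriv (fun s => (d : ℝ) * κ₂ * s * yb - κ₃ * yb) xb
     let J₂₂ : ℝ := deriv (fun s => (d : ℝ) * κ₂ * xb * s - κ₃ * s) yb
     0 < J₁₁ * J₂₂ - J₁₂ * J₂₁ ∧ 0 < J₁₁ + J₂₂) ∧
    -- no periodic orbit in ℝ²(≥0)
    ¬ ∃ (x y : ℝ → ℝ) (T : ℝ), 0 < T ∧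
      (∀ t, 0 ≤ x t ∧ 0 ≤ y t) ∧
      (∀ t, HasDerivAt x (κ₁ * x t ^ 2 - κ₂ * x t * y t) t) ∧
      (∀ t, HasDerivAt y ((d : ℝ) * κ₂ * x t * y t - κ₃ * y t) t) ∧
      (∀ t, x (t + T) = x t ∧ y (t + T) = y t) ∧
      (∃ t s, (x t, y t) ≠ (x s, y s)) := by
  have hd' : (0 : ℝ) < d := Int.cast_pos.2 (by omega)
  refine ⟨fun p hp₁ hp₂ => ?_, lva_jacobian_det_pos_and_trace_pos hκ₁ hκ₂ hκ₃ hd', ?_⟩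
  · rw [Prod.ext_iff]
    exact lva_equilibrium_iff hκ₂.ne' hd'.ne' hp₁ hp₂
  · rintro ⟨x, y, T, hT, hnn, hx, hy, hper, t, s, hne⟩
    rcases lva_periodic_solution_eq_equilibrium hκ₁ hκ₂ hκ₃ hd' hT.ne' (fun t => (hper t).1)
      (fun t => (hper t).2) (fun t => (hnn t).1) (fun t => (hnn t).2) hx hy with h | h <;>
      exact hne (by rw [(h t).1, (h t).2, (h s).1, (h s).2])
end

section
/- Let κ_1, κ_2, κ_3 > 0 and C > 0 be real numbers and let d ≥ 1 be an integer, and assume dκ_2² > κ_1κ_3. Define v̄ = κ_1/κ_2 and w̄ = (dκ_2² − κ_1κ_3)/(κ_2κ_3C), so that (v̄, w̄) ∈ ℝ^2_{>0}, and define V : ℝ^2_{>0} → ℝ by V(v,w) = κ_2(v − v̄ log v) + κ_3C(w − w̄ log w). Then for every differentiable function (v,w) : ℝ → ℝ^2_{>0} satisfying v̇ = v((dκ_2 − κ_1) + (κ_2 − κ_3)v − κ_3Cw) and ẇ = w(−κ_1 + κ_2 v), one has d/dt V(v(t), w(t)) = κ_2(κ_2 − κ_3)(v(t) − v̄)² for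 all t ∈ ℝ. -/
/-!
For a nonvanishing function `x` with per-capita growth rate `ẋ / x = r`, the derivative of
`x - x̄ log x` is `r (x - x̄)`. At the equilibrium `(v̄, w̄)` the per-capita rates of the
system become linear in the deviations:
`v̇ / v = (κ₂ - κ₃)(v - v̄) - κ₃C(w - w̄)` and `ẇ / w = κ₂(v - v̄)`.
With the weights `κ₂` and `κ₃C` the cross terms `(v - v̄)(w - w̄)` cancel, leaving
`κ₂(κ₂ - κ₃)(v - v̄)²`.
-/

theorem HasDerivAt.sub_mul_log {f : ℝ → ℝ} {r t : ℝ} (c : ℝ) (hf : HasDerivAt f (f t * r) t)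
    (ht : f t ≠ 0) : HasDerivAt (fun s => f s - c * Real.log (f s)) (r * (f t - c)) t := by
  have hlog : HasDerivAt (fun s => Real.log (f s)) r t := by
    simpa [ht] using hf.log ht
  exact (hf.sub (hlog.const_mul c)).congr_deriv (by ring)

theorem lotkaVolterra_lyapunov_rate (κ₁ κ₂ κ₃ C d v w : ℝ) (hκ₂ : κ₂ ≠ 0) (hκ₃ : κ₃ ≠ 0)
    (hC : C ≠ 0) :
    κ₂ * ((d * κ₂ - κ₁ + (κ₂ - κ₃) * v - κ₃ * C * w) * (v - κ₁ / κ₂)) +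
      κ₃ * C * ((-κ₁ + κ₂ * v) * (w - (d * κ₂ ^ 2 - κ₁ * κ₃) / (κ₂ * κ₃ * C))) =
    κ₂ * (κ₂ - κ₃) * (v - κ₁ / κ₂) ^ 2 := by
  field_simp
  ring

theorem stmt17_general (κ₁ κ₂ κ₃ C : ℝ) (hκ₁ : 0 < κ₁) (hκ₂ : 0 < κ₂) (hκ₃ : 0 < κ₃)
    (hC : 0 < C) (d : ℤ)
    (hcond : κ₁ * κ₃ < (d : ℝ) * κ₂ ^ 2) :
    (0 < κ₁ / κ₂ ∧ 0 < ((d : ℝ) * κ₂ ^ 2 - κ₁ * κ₃) / (κ₂ * κ₃ * C)) ∧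
    ∀ v w : ℝ → ℝ,
      (∀ t, 0 < v t ∧ 0 < w t) →
      (∀ t, HasDerivAt v
        (v t * (((d : ℝ) * κ₂ - κ₁) + (κ₂ - κ₃) * v t - κ₃ * C * w t)) t) →
      (∀ t, HasDerivAt w (w t * (-κ₁ + κ₂ * v t)) t) →
      ∀ t, HasDerivAt
        (fun s => κ₂ * (v s - (κ₁ / κ₂) * Real.log (v s)) +
          κ₃ * C * (w s - (((d : ℝ) * κ₂ ^ 2 - κ₁ * κ₃) / (κ₂ * κ₃ * C)) * Real.log (w s)))
        (κ₂ * (κ₂ - κ₃) * (v t - κ₁ / κ₂) ^ 2) t := by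
  refine ⟨⟨div_pos hκ₁ hκ₂, div_pos (by linarith) (by positivity)⟩, ?_⟩
  intro v w hpos hv hw t
  have hV := (((hv t).sub_mul_log (κ₁ / κ₂) (hpos t).1.ne').const_mul κ₂).add
    (((hw t).sub_mul_log (((d : ℝ) * κ₂ ^ 2 - κ₁ * κ₃) / (κ₂ * κ₃ * C))
      (hpos t).2.ne').const_mul (κ₃ * C))
  rwa [lotkaVolterra_lyapunov_rate κ₁ κ₂ κ₃ C d (v t) (w t) hκ₂.ne' hκ₃.ne' hC.ne'] at hV

/-- Along any positive solution of the predator–prey system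
`v̇ = v((dκ₂ − κ₁) + (κ₂ − κ₃)v − κ₃Cw)`, `ẇ = w(−κ₁ + κ₂v)`, the Lyapunov
function `V(v,w) = κ₂(v − v̄ log v) + κ₃C(w − w̄ log w)`, where `v̄ = κ₁/κ₂` and
`w̄ = (dκ₂² − κ₁κ₃)/(κ₂κ₃C)`, satisfies
`d/dt V(v(t),w(t)) = κ₂(κ₂ − κ₃)(v(t) − v̄)²`. -/
theorem stmt17 (κ₁ κ₂ κ₃ C : ℝ) (hκ₁ : 0 < κ₁) (hκ₂ : 0 < κ₂) (hκ₃ : 0 < κ₃)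
    (hC : 0 < C) (d : ℤ) (hd : 1 ≤ d)
    (hcond : κ₁ * κ₃ < (d : ℝ) * κ₂ ^ 2) :
    (0 < κ₁ / κ₂ ∧ 0 < ((d : ℝ) * κ₂ ^ 2 - κ₁ * κ₃) / (κ₂ * κ₃ * C)) ∧
    ∀ v w : ℝ → ℝ,
      (∀ t, 0 < v t ∧ 0 < w t) →
      (∀ t, HasDerivAt v
        (v t * (((d : ℝ) * κ₂ - κ₁) + (κ₂ - κ₃) * v t - κ₃ * C * w t)) t) →
      (∀ t, HasDerivAt w (w t * (-κ₁ + κ₂ * v t)) t) →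
      ∀ t, HasDerivAt
        (fun s => κ₂ * (v s - (κ₁ / κ₂) * Real.log (v s)) +
          κ₃ * C * (w s - (((d : ℝ) * κ₂ ^ 2 - κ₁ * κ₃) / (κ₂ * κ₃ * C)) * Real.log (w s)))
        (κ₂ * (κ₂ - κ₃) * (v t - κ₁ / κ₂) ^ 2) t :=
  stmt17_general κ₁ κ₂ κ₃ C hκ₁ hκ₂ hκ₃ hC d hcond
end

section
/- Consider a reaction network on 2 species with 3 reactions, with source matrix A ∈ ℤ^{2×3} (nonnegative entries) and stoichiometric matrix Γ ∈ ℤ^{2×3} (with A + Γ entrywise nonnegative), such that the network is quadratic (every column of A has entry sum at most 2) and the multiset of columns of A is, up to exchanging the two species, one of the following six configurations: {(0,0)ᵀ, (1,0)ᵀ, (0,1)ᵀ}, {(0,0)ᵀ, (1,0)ᵀ, (1,1)ᵀ}, {(0,0)ᵀ, (2,0)ᵀ, (0,1)ᵀ}, {(1,0)ᵀ, (2,0)ᵀ, (0,1)ᵀ}, {(0,0)ᵀ, (2,0)ᵀ, (0,2)ᵀ}, {(1,0)ᵀ, (2,0)ᵀ, (0,2)ᵀ}. Then for every vector of positive rate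 constants κ ∈ ℝ^3_{>0} and for arbitrary target complexes (i.e., with no restriction on Γ beyond A + Γ being entrywise nonnegative), the associated mass-action system has no periodic orbit in ℝ^2_{≥0}. -/
open scoped BigOperators

/-- `O` is a periodic orbit of `ẋ = f x` in the nonnegative orthant. -/
def IsPeriodicOrbit {n : ℕ} (f : (Fin n → ℝ) → (Fin n → ℝ)) (O : Set (Fin n → ℝ)) : Prop :=
  ∃ (x : ℝ → (Fin n → ℝ)) (T : ℝ), 0 < T ∧
    (∀ t i, 0 ≤ x t i) ∧
    (∀ t, HasDerivAt x (f (x t)) t) ∧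
    (∀ t, x (t + T) = x t) ∧
    (∃ t s, x t ≠ x s) ∧
    O = Set.range x

/-!
Let `u` be a periodic solution and `w = u'` its velocity; `w` solves the variational equation
`w' = J(t) w`, where `J` is the Jacobian of the vector field along `u`. When every source complex
involves at most one species (five of the six configurations), `J` has nonnegative off-diagonal
entries on the nonnegative orthant, so closed orthants are forward invariant for `w`. At a
maximum of `u₀` the planar vector `w` lies on an axis, hence stays in one closed quadrant from
then on: both components of `u` are eventually monotone, and periodicity makes `u` constant.

For the sources `{0, X, X+Y}` the system is `X' = P + aX + bXY`, `Y' = q + cX + dXY` with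
`P, q, c ≥ 0`. If `d ≥ 0` then `Y` is nondecreasing. Otherwise a shift of `Y` gives
`X' = P + (e + bZ)X`, `Z' = q - KXZ` with `K > 0`: for `q = 0` the function `Z²` is nonincreasing;
for `b ≤ 0` the system is competitive and the argument above applies to `(X, -Z)`; for `b > 0`,
`e ≥ 0` the quantity `KX + bZ` increases strictly; and for `b > 0`, `e < 0` the Lotka–Volterra
function `K(X - ξ log X) + b(Z - ζ log Z)` around the equilibrium `(ξ, ζ)` is nonincreasing, with
derivative vanishing only on the line `Z = ζ`.
-/

open Set Filter Topology Function Real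
open scoped Matrix

theorem HasDerivAt.eq_zero_of_forall_eq {u : ℝ → ℝ} {u' t c : ℝ} (hu : HasDerivAt u u' t)
    (hc : ∀ s, u s = c) : u' = 0 := by
  rw [show u = fun _ => c from funext hc] at hu
  exact hu.unique (hasDerivAt_const t c)

namespace Function.Periodic

variable {u w : ℝ → ℝ} {T : ℝ}

theorem exists_isMaxOn (hu : Periodic u T) (hT : T ≠ 0) (hc : Continuous u) :
    ∃ t, IsMaxOn u univ t := by
  obtain ⟨_, ⟨t, rfl⟩, ht⟩ :=
    (hu.compact_of_continuous hT hc).exists_isGreatest (range_nonempty u)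
  exact ⟨t, fun s _ => ht (mem_range_self s)⟩

theorem exists_isMinOn (hu : Periodic u T) (hT : T ≠ 0) (hc : Continuous u) :
    ∃ t, IsMinOn u univ t := by
  obtain ⟨_, ⟨t, rfl⟩, ht⟩ :=
    (hu.compact_of_continuous hT hc).exists_isLeast (range_nonempty u)
  exact ⟨t, fun s _ => ht (mem_range_self s)⟩

theorem eq_of_monotoneOn_Ici (hu : Periodic u T) (hT : 0 < T) {a : ℝ}
    (hm : MonotoneOn u (Ici a)) (t s : ℝ) : u t = u s := by
  have shift : ∀ p q : ℝ, ∃ n : ℕ, q ≤ p + n * T := fun p q => by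
    obtain ⟨n, hn⟩ := exists_nat_ge ((q - p) / T)
    exact ⟨n, by rw [div_le_iff₀ hT] at hn; linarith⟩
  have hconst : ∀ p, a ≤ p → u p = u a := fun p hp => by
    obtain ⟨n, hn⟩ := shift a p
    have hup : u p ≤ u (a + n * T) := hm hp (hp.trans hn) hn
    exact le_antisymm (by rwa [hu.nat_mul n a] at hup) (hm self_mem_Ici hp hp)
  obtain ⟨n, hn⟩ := shift t a
  obtain ⟨m, hm⟩ := shift s a
  rw [← hu.nat_mul n t, ← hu.nat_mul m s, hconst _ hn, hconst _ hm]

theorem eq_of_hasDerivAt_nonneg_Ici (hu : Periodic u T) (hT : 0 < T)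
    (hd : ∀ t, HasDerivAt u (w t) t) {a : ℝ} (hw : ∀ t, a ≤ t → 0 ≤ w t) (t s : ℝ) :
    u t = u s := by
  refine hu.eq_of_monotoneOn_Ici hT (a := a) ?_ t s
  refine monotoneOn_of_hasDerivWithinAt_nonneg (convex_Ici a)
    (fun t _ => (hd t).continuousAt.continuousWithinAt) (fun t _ => (hd t).hasDerivWithinAt) ?_
  rw [interior_Ici]
  exact fun t ht => hw t (le_of_lt ht)

theorem hasDerivAt_eq_zero_of_nonneg_s18 (hu : Periodic u T) (hT : 0 < T)
    (hd : ∀ t, HasDerivAt u (w t) t) (hw : ∀ t, 0 ≤ w t) (t : ℝ) : w t = 0 :=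
  (hd t).eq_zero_of_forall_eq fun s =>
    hu.eq_of_hasDerivAt_nonneg_Ici hT hd (a := 0) (fun t _ => hw t) s 0

theorem hasDerivAt_eq_zero_of_nonpos (hu : Periodic u T) (hT : 0 < T)
    (hd : ∀ t, HasDerivAt u (w t) t) (hw : ∀ t, w t ≤ 0) (t : ℝ) : w t = 0 :=
  neg_eq_zero.1 <| (hu.comp Neg.neg).hasDerivAt_eq_zero_of_nonneg_s18 hT (fun t => (hd t).neg)
    (fun t => neg_nonneg.2 (hw t)) t

end Function.Periodic

theorem eq_zero_of_hasDerivAt_mul {w h : ℝ → ℝ} (hh : Continuous h)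
    (hw : ∀ t, HasDerivAt w (h t * w t) t) {t₀ : ℝ} (h₀ : w t₀ = 0) (t : ℝ) : w t = 0 := by
  -- integrating factor `exp (-∫ h)`
  have hd : ∀ t, HasDerivAt (fun t => w t * exp (-∫ s in t₀..t, h s)) 0 t := fun t =>
    ((hw t).mul (hh.integral_hasStrictDerivAt t₀ t).hasDerivAt.neg.exp).congr_deriv (by ring)
  have := is_const_of_deriv_eq_zero (fun t => (hd t).differentiableAt) (fun t => (hd t).deriv)
    t t₀
  simpa [h₀, (exp_pos _).ne'] using this

theorem eq_zero_or_pos_of_hasDerivAt {X h : ℝ → ℝ} {P : ℝ} (hh : Continuous h)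
    (hX₀ : ∀ t, 0 ≤ X t) (hX : ∀ t, HasDerivAt X (P + h t * X t) t) :
    (∀ t, X t = 0) ∨ ∀ t, 0 < X t := by
  by_cases hzero : ∃ t₀, X t₀ = 0
  · obtain ⟨t₀, ht₀⟩ := hzero
    have hmin : IsMinOn X univ t₀ := fun s _ => ht₀ ▸ hX₀ s
    have hP : P = 0 := by
      simpa [ht₀] using (hmin.isLocalMin univ_mem).hasDerivAt_eq_zero (hX t₀)
    exact Or.inl (eq_zero_of_hasDerivAt_mul hh (by simpa [hP] using hX) ht₀)
  · push Not at hzero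
    exact Or.inr fun t => (hX₀ t).lt_of_ne (hzero t).symm

theorem Function.Periodic.eq_of_hasDerivAt_affine {u : ℝ → ℝ} {T P μ : ℝ} (hu : Periodic u T)
    (hT : 0 < T) (hd : ∀ t, HasDerivAt u (P + μ * u t) t) (t s : ℝ) : u t = u s := by
  obtain ⟨t₁, ht₁⟩ :=
    hu.exists_isMaxOn hT.ne' (continuous_iff_continuousAt.2 fun t => (hd t).continuousAt)
  have hw : ∀ t, HasDerivAt (fun t => P + μ * u t) (μ * (P + μ * u t)) t :=
    fun t => ((hd t).const_mul μ).const_add P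
  have hzero := eq_zero_of_hasDerivAt_mul continuous_const hw
    ((ht₁.isLocalMax univ_mem).hasDerivAt_eq_zero (hd t₁))
  exact hu.eq_of_hasDerivAt_nonneg_Ici hT hd (a := 0) (fun t _ => (hzero t).ge) t s

def Matrix.IsMetzler {ι R : Type*} [Zero R] [LE R] (J : Matrix ι ι R) : Prop :=
  Pairwise fun i k => 0 ≤ J i k

theorem eventually_pos_nhdsGT_of_hasDerivAt {g : ℝ → ℝ} {g' x : ℝ} (hg : HasDerivAt g g' x)
    (h₀ : g x = 0) (hpos : 0 < g') : ∀ᶠ y in 𝓝[>] x, 0 < g y := by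
  have hslope :=
    (hasDerivWithinAt_iff_tendsto_slope' (lt_irrefl x)).1 (hg.hasDerivWithinAt (s := Ioi x))
  filter_upwards [hslope.eventually (lt_mem_nhds hpos), self_mem_nhdsWithin] with y hy hxy
  rw [slope_def_field, h₀, sub_zero] at hy
  exact (div_pos_iff_of_pos_right (sub_pos.2 hxy)).1 hy

theorem Icc_subset_nonneg_of_hasDerivAt {ι : Type*} [Fintype ι] {g g' : ℝ → ι → ℝ} {t₀ t₁ : ℝ}
    (hg : ∀ t, HasDerivAt g (g' t) t) (h₀ : 0 ≤ g t₀)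
    (hface : ∀ t ∈ Ico t₀ t₁, 0 ≤ g t → ∀ k, g t k = 0 → 0 < g' t k) :
    Icc t₀ t₁ ⊆ {t | 0 ≤ g t} := by
  have hgc : Continuous g := continuous_iff_continuousAt.2 fun t => (hg t).continuousAt
  refine IsClosed.Icc_subset_of_forall_mem_nhdsWithin
    ((isClosed_le continuous_const hgc).inter isClosed_Icc) h₀ ?_
  rintro t ⟨htg, htI⟩
  refine eventually_all.2 fun k => ?_
  rcases (show 0 ≤ g t k from htg k).eq_or_lt with hk | hk
  · exact (eventually_pos_nhdsGT_of_hasDerivAt (hasDerivAt_pi.1 (hg t) k) hk.symm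
      (hface t htI htg k hk.symm)).mono fun _ => le_of_lt
  · exact ((((continuous_apply k).comp hgc).continuousAt.eventually (lt_mem_nhds hk)).filter_mono
      nhdsWithin_le_nhds).mono fun _ => le_of_lt

theorem nonneg_of_hasDerivAt_mulVec_of_isMetzler {ι : Type*} [Fintype ι] {w : ℝ → ι → ℝ}
    {J : ℝ → Matrix ι ι ℝ} (hJ : Continuous J) (hM : ∀ t, (J t).IsMetzler)
    (hw : ∀ t, HasDerivAt w (J t *ᵥ w t) t) {t₀ t₁ : ℝ} (h₀ : 0 ≤ w t₀) (ht : t₀ ≤ t₁) :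
    0 ≤ w t₁ := by
  obtain ⟨M, hMub⟩ := isCompact_Icc.bddAbove_image (f := fun t => ∑ i, ∑ k, |J t i k|)
    (K := Icc t₀ t₁) (by fun_prop)
  have hrow : ∀ t ∈ Icc t₀ t₁, ∀ i, ∑ k, J t i k ≤ M := fun t ht i =>
    calc ∑ k, J t i k ≤ ∑ k, |J t i k| := Finset.sum_le_sum fun k _ => le_abs_self _
      _ ≤ ∑ i, ∑ k, |J t i k| := Finset.single_le_sum (f := fun i => ∑ k, |J t i k|)
          (fun i _ => Finset.sum_nonneg fun k _ => abs_nonneg _) (Finset.mem_univ i)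
      _ ≤ M := hMub (mem_image_of_mem _ ht)
  intro i
  refine le_of_forall_pos_le_add fun ε hε => ?_
  -- perturb `w` by `ε e^{(M+1)(t - t₁)}`, whose growth rate beats every row sum of `J`
  set E : ℝ → ℝ := fun t => ε * exp ((M + 1) * (t - t₁)) with hE
  have hE' : ∀ t, HasDerivAt E (E t * (M + 1)) t := fun t =>
    ((((hasDerivAt_id' t).sub_const t₁).const_mul (M + 1)).exp.const_mul ε).congr_deriv
      (by simp only [hE]; ring)
  have hEpos : ∀ t, 0 < E t := fun t => by positivity
  have key := Icc_subset_nonneg_of_hasDerivAt (g := fun t k => w t k + E t)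
    (fun t => hasDerivAt_pi.2 fun k => (hasDerivAt_pi.1 (hw t) k).add (hE' t))
    (fun k => add_nonneg (h₀ k) (hEpos t₀).le) fun t htI htg k hk => by
      have hsum : 0 ≤ ∑ l, J t k l * (w t l + E t) := Finset.sum_nonneg fun l _ => by
        rcases eq_or_ne k l with rfl | hkl
        · rw [hk, mul_zero]
        · exact mul_nonneg (hM t hkl) (htg l)
      have hmv : (J t *ᵥ w t) k = ∑ l, J t k l * (w t l + E t) - E t * ∑ l, J t k l := by
        simp [Matrix.mulVec, dotProduct, mul_add, Finset.sum_add_distrib, Finset.sum_mul,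
          mul_comm]
      have := mul_le_mul_of_nonneg_left (hrow t (Ico_subset_Icc_self htI) k) (hEpos t).le
      nlinarith [hEpos t]
  simpa [hE] using key ⟨ht, le_rfl⟩ i

theorem Function.Periodic.eq_of_cooperative {u w : ℝ → Fin 2 → ℝ}
    {J : ℝ → Matrix (Fin 2) (Fin 2) ℝ} {T : ℝ} (hu : Periodic u T) (hT : 0 < T)
    (hu' : ∀ t, HasDerivAt u (w t) t) (hJ : Continuous J) (hM : ∀ t, (J t).IsMetzler)
    (hw : ∀ t, HasDerivAt w (J t *ᵥ w t) t) (t s : ℝ) : u t = u s := by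
  obtain ⟨t₁, ht₁⟩ := (hu.comp fun x => x 0).exists_isMaxOn hT.ne'
    ((continuous_apply 0).comp (continuous_iff_continuousAt.2 fun t => (hu' t).continuousAt))
  have hw₀ : w t₁ 0 = 0 :=
    (ht₁.isLocalMax univ_mem).hasDerivAt_eq_zero (hasDerivAt_pi.1 (hu' t₁) 0)
  clear ht₁
  -- at a maximum of `u 0`, `w` lies on an axis, hence in the closed first or third quadrant
  wlog h₁ : 0 ≤ w t₁ 1 generalizing u w
  · refine neg_inj.1 (this (u := -u) (w := -w) (hu.comp Neg.neg) (fun t => (hu' t).neg)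
      (fun t => by simpa [Matrix.mulVec_neg] using (hw t).neg) (by simp [hw₀]) ?_)
    simp only [Pi.neg_apply]
    linarith
  have hinv : ∀ t, t₁ ≤ t → 0 ≤ w t := fun t ht =>
    nonneg_of_hasDerivAt_mulVec_of_isMetzler hJ hM hw
      (fun i => by fin_cases i <;> simp [hw₀, h₁]) ht
  funext i
  exact (hu.comp fun x => x i).eq_of_hasDerivAt_nonneg_Ici hT
    (fun t => hasDerivAt_pi.1 (hu' t) i) (fun t ht => hinv t ht i) t s

section MassAction

variable {n m : ℕ} (A Γ : Matrix (Fin n) (Fin m) ℤ) (κ : Fin m → ℝ)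

noncomputable def massActionJacobian (x : Fin n → ℝ) : Matrix (Fin n) (Fin n) ℝ :=
  Matrix.of fun i k => ∑ j, (Γ i j : ℝ) * κ j *
    ((A k j).toNat * x k ^ ((A k j).toNat - 1) * ∏ l ∈ Finset.univ.erase k, x l ^ (A l j).toNat)

theorem continuous_massActionJacobian : Continuous (massActionJacobian A Γ κ) :=
  continuous_pi fun i => continuous_pi fun k => by
    simp only [massActionJacobian, Matrix.of_apply]
    fun_prop

variable {A Γ κ}

theorem HasDerivAt.massAction {x : ℝ → Fin n → ℝ} {x' : Fin n → ℝ} {t : ℝ}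
    (hx : HasDerivAt x x' t) :
    HasDerivAt (fun t => massAction A Γ κ (x t)) (massActionJacobian A Γ κ (x t) *ᵥ x') t := by
  refine hasDerivAt_pi.2 fun i => ?_
  have hmon : ∀ j, HasDerivAt (fun t => ∏ k, x t k ^ (A k j).toNat)
      (∑ k, (∏ l ∈ Finset.univ.erase k, x t l ^ (A l j).toNat) •
        ((A k j).toNat * x t k ^ ((A k j).toNat - 1) * x' k)) t :=
    fun j => HasDerivAt.fun_finsetProd fun k _ => (hasDerivAt_pi.1 hx k).pow _
  refine (HasDerivAt.fun_sum (u := Finset.univ) fun j _ =>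
    (hmon j).const_mul ((Γ i j : ℝ) * κ j)).congr_deriv ?_
  simp only [Matrix.mulVec, dotProduct, massActionJacobian, Matrix.of_apply, Finset.sum_mul,
    Finset.mul_sum, smul_eq_mul]
  rw [Finset.sum_comm]
  refine Finset.sum_congr rfl fun j _ => Finset.sum_congr rfl fun k _ => by ring

theorem isMetzler_massActionJacobian (hA : ∀ j, Pairwise fun i k => A i j = 0 ∨ A k j = 0)
    (hAΓ : ∀ i j, 0 ≤ A i j + Γ i j) (hκ : ∀ j, 0 < κ j) {x : Fin n → ℝ} (hx : 0 ≤ x) :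
    (massActionJacobian A Γ κ x).IsMetzler := by
  intro i k hik
  rw [massActionJacobian, Matrix.of_apply]
  refine Finset.sum_nonneg fun j _ => ?_
  rcases hA j hik with hij | hkj
  · have hΓ : (0 : ℝ) ≤ Γ i j := by
      exact_mod_cast (by simpa [hij] using hAΓ i j : (0 : ℤ) ≤ Γ i j)
    have hprod : 0 ≤ ∏ l ∈ Finset.univ.erase k, x l ^ (A l j).toNat :=
      Finset.prod_nonneg fun l _ => pow_nonneg (hx l) _
    exact mul_nonneg (mul_nonneg hΓ (hκ j).le)
      (mul_nonneg (mul_nonneg (Nat.cast_nonneg _) (pow_nonneg (hx k) _)) hprod)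
  · simp [hkj]

end MassAction

structure IsPeriodicSolution {n : ℕ} (f : (Fin n → ℝ) → Fin n → ℝ) (x : ℝ → Fin n → ℝ)
    (T : ℝ) : Prop where
  pos : 0 < T
  nonneg : ∀ t, 0 ≤ x t
  hasDerivAt : ∀ t, HasDerivAt x (f (x t)) t
  periodic : Periodic x T

namespace IsPeriodicSolution

variable {n m : ℕ} {κ : Fin m → ℝ} {T : ℝ}

theorem continuous {f : (Fin n → ℝ) → Fin n → ℝ} {x : ℝ → Fin n → ℝ}
    (hx : IsPeriodicSolution f x T) : Continuous x :=
  continuous_iff_continuousAt.2 fun t => (hx.hasDerivAt t).continuousAt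

theorem comp_perm {A Γ : Matrix (Fin n) (Fin m) ℤ} {x : ℝ → Fin n → ℝ}
    (σ : Equiv.Perm (Fin n)) (τ : Equiv.Perm (Fin m))
    (hx : IsPeriodicSolution (massAction A Γ κ) x T) :
    IsPeriodicSolution (massAction (A.submatrix σ τ) (Γ.submatrix σ τ) (κ ∘ τ))
      (fun t => x t ∘ σ) T where
  pos := hx.pos
  nonneg t i := hx.nonneg t (σ i)
  hasDerivAt t := by
    have hperm : massAction (A.submatrix σ τ) (Γ.submatrix σ τ) (κ ∘ τ) (x t ∘ σ) =
        massAction A Γ κ (x t) ∘ σ := by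
      funext i
      simp only [massAction, Matrix.submatrix_apply, comp_apply]
      exact Fintype.sum_equiv τ _ _ fun j => by
        rw [Equiv.prod_comp σ (fun k => x t k ^ (A k (τ j)).toNat)]
    rw [hperm]
    exact hasDerivAt_pi.2 fun i => hasDerivAt_pi.1 (hx.hasDerivAt t) (σ i)
  periodic t := by simp only [hx.periodic t]

theorem eq_of_sources_single_species {A Γ : Matrix (Fin 2) (Fin m) ℤ} {x : ℝ → Fin 2 → ℝ}
    (hA : ∀ j, Pairwise fun i k => A i j = 0 ∨ A k j = 0) (hAΓ : ∀ i j, 0 ≤ A i j + Γ i j)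
    (hκ : ∀ j, 0 < κ j) (hx : IsPeriodicSolution (massAction A Γ κ) x T) (t s : ℝ) :
    x t = x s :=
  hx.periodic.eq_of_cooperative hx.pos hx.hasDerivAt
    ((continuous_massActionJacobian A Γ κ).comp hx.continuous)
    (fun t => isMetzler_massActionJacobian hA hAΓ hκ (hx.nonneg t))
    (fun t => (hx.hasDerivAt t).massAction) t s

end IsPeriodicSolution

theorem HasDerivAt.finTwo {f g : ℝ → ℝ} {f' g' t : ℝ} (hf : HasDerivAt f f' t)
    (hg : HasDerivAt g g' t) : HasDerivAt (fun t => ![f t, g t]) ![f', g'] t :=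
  hasDerivAt_pi.2 fun i => by fin_cases i <;> simpa

section LotkaVolterra

variable {X Z : ℝ → ℝ} {T P q e b K : ℝ}

theorem eq_of_lotkaVolterra_of_q_eq_zero (hT : 0 < T) (hXT : Periodic X T) (hZT : Periodic Z T)
    (hX₀ : ∀ t, 0 ≤ X t) (hK : 0 < K) (hq : q = 0)
    (hX : ∀ t, HasDerivAt X (P + (e + b * Z t) * X t) t)
    (hZ : ∀ t, HasDerivAt Z (q - K * (X t * Z t)) t) (t s : ℝ) : X t = X s ∧ Z t = Z s := by
  subst hq
  -- `Z²` decreases along the flow, so by periodicity it is constant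
  have hZ2 : ∀ t, HasDerivAt (fun t => Z t ^ 2) (-(2 * K) * (X t * Z t ^ 2)) t :=
    fun t => ((hZ t).fun_pow 2).congr_deriv (by ring)
  have hZ2' := (hZT.comp (· ^ 2)).hasDerivAt_eq_zero_of_nonpos hT hZ2 fun t =>
    mul_nonpos_of_nonpos_of_nonneg (by linarith) (mul_nonneg (hX₀ t) (sq_nonneg _))
  have hXZ : ∀ t, X t * Z t = 0 := fun t => by
    rcases mul_eq_zero.1 ((mul_eq_zero.1 (hZ2' t)).resolve_left (by linarith)) with h | h
    · simp [h]
    · simp [pow_eq_zero_iff two_ne_zero |>.1 h]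
  have hZc := hZT.eq_of_hasDerivAt_nonneg_Ici hT hZ (a := 0) fun t _ => by simp [hXZ t]
  have hXc := hXT.eq_of_hasDerivAt_affine hT (P := P) (μ := e + b * Z 0) fun t => by
    rw [← hZc t 0]
    exact hX t
  exact ⟨hXc t s, hZc t s⟩

theorem pos_of_lotkaVolterra (hT : 0 < T) (hZT : Periodic Z T) (hX₀ : ∀ t, 0 ≤ X t) (hK : 0 < K)
    (hq : 0 < q) (hZ : ∀ t, HasDerivAt Z (q - K * (X t * Z t)) t) (t : ℝ) : 0 < Z t := by
  obtain ⟨t₂, ht₂⟩ := hZT.exists_isMinOn hT.ne'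
    (continuous_iff_continuousAt.2 fun t => (hZ t).continuousAt)
  have hcrit := (ht₂.isLocalMin univ_mem).hasDerivAt_eq_zero (hZ t₂)
  have hpos : 0 < Z t₂ := by
    by_contra! hneg
    nlinarith [mul_nonneg hK.le (hX₀ t₂)]
  exact hpos.trans_le (ht₂ (mem_univ t))

theorem eq_of_lotkaVolterra_of_b_nonpos (hT : 0 < T) (hXT : Periodic X T) (hZT : Periodic Z T)
    (hX₀ : ∀ t, 0 ≤ X t) (hZ₀ : ∀ t, 0 ≤ Z t) (hK : 0 ≤ K) (hb : b ≤ 0)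
    (hX : ∀ t, HasDerivAt X (P + (e + b * Z t) * X t) t)
    (hZ : ∀ t, HasDerivAt Z (q - K * (X t * Z t)) t) (t s : ℝ) : X t = X s ∧ Z t = Z s := by
  set w₀ : ℝ → ℝ := fun t => P + (e + b * Z t) * X t
  set w₁ : ℝ → ℝ := fun t => q - K * (X t * Z t)
  have hw₀ : ∀ t, HasDerivAt w₀ ((e + b * Z t) * w₀ t + -(b * X t) * -w₁ t) t := fun t =>
    ((((hZ t).const_mul b).const_add e).mul (hX t)).const_add P |>.congr_deriv (by ring)
  have hw₁ : ∀ t, HasDerivAt (fun t => -w₁ t) (K * Z t * w₀ t + -(K * X t) * -w₁ t) t :=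
    fun t => (((hX t).mul (hZ t)).const_mul K).const_sub q |>.neg.congr_deriv (by ring)
  have hXc : Continuous X := continuous_iff_continuousAt.2 fun t => (hX t).continuousAt
  have hZc : Continuous Z := continuous_iff_continuousAt.2 fun t => (hZ t).continuousAt
  -- the system is competitive, so `(X, -Z)` solves a cooperative one
  have key := Periodic.eq_of_cooperative (u := fun t => ![X t, -Z t])
    (J := fun t => !![e + b * Z t, -(b * X t); K * Z t, -(K * X t)])
    (fun t => by simp only [hXT t, hZT t]) hT (fun t => (hX t).finTwo (hZ t).neg) (by fun_prop)
    (fun t i k hik => by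
      fin_cases i <;> fin_cases k
      · exact absurd rfl hik
      · exact neg_nonneg.2 (mul_nonpos_of_nonpos_of_nonneg hb (hX₀ t))
      · exact mul_nonneg hK (hZ₀ t)
      · exact absurd rfl hik)
    (fun t => ((hw₀ t).finTwo (hw₁ t)).congr_deriv (by rw [Matrix.mulVec_fin_two]; rfl)) t s
  exact ⟨congrFun key 0, neg_inj.1 (congrFun key 1)⟩

theorem false_of_lotkaVolterra_of_b_pos_of_e_nonneg (hT : 0 < T) (hXT : Periodic X T)
    (hZT : Periodic Z T) (hX₀ : ∀ t, 0 ≤ X t) (hK : 0 < K) (hP : 0 ≤ P) (hq : 0 < q)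
    (hb : 0 < b) (he : 0 ≤ e)
    (hX : ∀ t, HasDerivAt X (P + (e + b * Z t) * X t) t)
    (hZ : ∀ t, HasDerivAt Z (q - K * (X t * Z t)) t) : False := by
  have hL : ∀ t, HasDerivAt (fun t => K * X t + b * Z t) (K * P + b * q + K * e * X t) t :=
    fun t => (((hX t).const_mul K).add ((hZ t).const_mul b)).congr_deriv (by ring)
  have hterm : ∀ t, 0 ≤ K * P + K * e * X t := fun t =>
    add_nonneg (mul_nonneg hK.le hP) (mul_nonneg (mul_nonneg hK.le he) (hX₀ t))
  have hL0 := (show Periodic (fun t => K * X t + b * Z t) T from fun t => by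
    simp only [hXT t, hZT t]).hasDerivAt_eq_zero_of_nonneg_s18 hT hL
    (fun t => by linarith [hterm t, mul_pos hb hq]) 0
  linarith [hterm 0, mul_pos hb hq]

theorem eq_of_lotkaVolterra_of_lyapunov {ξ ζ : ℝ} (hT : 0 < T) (hXT : Periodic X T)
    (hZT : Periodic Z T) (hK : 0 < K) (hP : 0 ≤ P) (hb : 0 < b) (hξ : 0 < ξ) (hζ : 0 < ζ)
    (heq : P + (e + b * ζ) * ξ = 0) (hq : q = K * ξ * ζ) (hXpos : ∀ t, 0 < X t)
    (hZpos : ∀ t, 0 < Z t) (hX : ∀ t, HasDerivAt X (P + (e + b * Z t) * X t) t)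
    (hZ : ∀ t, HasDerivAt Z (q - K * (X t * Z t)) t) (t s : ℝ) : X t = X s ∧ Z t = Z s := by
  have he : e = -(P + b * ζ * ξ) / ξ := by field_simp; linarith
  subst he hq
  -- the Lotka–Volterra function centred at the equilibrium `(ξ, ζ)`
  have hV : ∀ t, HasDerivAt (fun t => K * (X t - ξ * log (X t)) + b * (Z t - ζ * log (Z t)))
      (-(K * P * (X t - ξ) ^ 2 / (X t * ξ)) - K * b * ξ * (Z t - ζ) ^ 2 / Z t) t := fun t => by
    refine ((((hX t).sub (((hX t).log (hXpos t).ne').const_mul ξ)).const_mul K).add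
      (((hZ t).sub (((hZ t).log (hZpos t).ne').const_mul ζ)).const_mul b)).congr_deriv ?_
    have := (hXpos t).ne'
    have := (hZpos t).ne'
    field_simp
    ring
  have hterm₁ : ∀ t, 0 ≤ K * P * (X t - ξ) ^ 2 / (X t * ξ) := fun t =>
    div_nonneg (mul_nonneg (mul_nonneg hK.le hP) (sq_nonneg _)) (mul_pos (hXpos t) hξ).le
  have hterm₂ : ∀ t, 0 ≤ K * b * ξ * (Z t - ζ) ^ 2 / Z t := fun t => by
    have := hZpos t
    positivity
  have hV0 := (show Periodic (fun t => K * (X t - ξ * log (X t)) + b * (Z t - ζ * log (Z t))) T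
    from fun t => by simp only [hXT t, hZT t]).hasDerivAt_eq_zero_of_nonpos hT hV
    fun t => by linarith [hterm₁ t, hterm₂ t]
  have hZeq : ∀ t, Z t = ζ := fun t => by
    have h : K * b * ξ * (Z t - ζ) ^ 2 / Z t = 0 := by linarith [hV0 t, hterm₁ t, hterm₂ t]
    simpa [hK.ne', hb.ne', hξ.ne', (hZpos t).ne', sub_eq_zero] using h
  have hXeq : ∀ t, X t = ξ := fun t => by
    have h := (hZ t).eq_zero_of_forall_eq hZeq
    rw [hZeq t] at h
    have h' : K * ζ * (ξ - X t) = 0 := by linarith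
    simpa [hK.ne', hζ.ne', sub_eq_zero, eq_comm] using h'
  exact ⟨by rw [hXeq t, hXeq s], by rw [hZeq t, hZeq s]⟩

theorem eq_of_lotkaVolterra (hT : 0 < T) (hXT : Periodic X T) (hZT : Periodic Z T)
    (hX₀ : ∀ t, 0 ≤ X t) (hK : 0 < K) (hP : 0 ≤ P) (hq : 0 ≤ q)
    (hX : ∀ t, HasDerivAt X (P + (e + b * Z t) * X t) t)
    (hZ : ∀ t, HasDerivAt Z (q - K * (X t * Z t)) t) (t s : ℝ) : X t = X s ∧ Z t = Z s := by
  rcases hq.eq_or_lt with hq | hq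
  · exact eq_of_lotkaVolterra_of_q_eq_zero hT hXT hZT hX₀ hK hq.symm hX hZ t s
  have hZpos := pos_of_lotkaVolterra hT hZT hX₀ hK hq hZ
  rcases le_or_gt b 0 with hb | hb
  · exact eq_of_lotkaVolterra_of_b_nonpos hT hXT hZT hX₀ (fun t => (hZpos t).le) hK.le hb hX hZ
      t s
  rcases le_or_gt 0 e with he | he
  · exact (false_of_lotkaVolterra_of_b_pos_of_e_nonneg hT hXT hZT hX₀ hK hP hq hb he hX hZ).elim
  have hZc : Continuous Z := continuous_iff_continuousAt.2 fun t => (hZ t).continuousAt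
  rcases eq_zero_or_pos_of_hasDerivAt (h := fun t => e + b * Z t) (by fun_prop) hX₀ hX
    with hX0 | hXpos
  · have hZc := hZT.eq_of_hasDerivAt_affine hT (P := q) (μ := 0) fun t => by
      simpa [hX0 t] using hZ t
    exact ⟨by rw [hX0 t, hX0 s], hZc t s⟩
  · set ξ := (K * P + b * q) / -(K * e)
    have hξ : 0 < ξ := div_pos (by positivity) (by nlinarith)
    exact eq_of_lotkaVolterra_of_lyapunov (ξ := ξ) (ζ := q / (K * ξ)) hT hXT hZT hK hP hb hξ
      (by positivity) (by have := he.ne; simp only [ξ]; field_simp; ring) (by field_simp)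
      hXpos hZpos hX hZ t s

end LotkaVolterra

theorem eq_of_bilinear {X Y : ℝ → ℝ} {T P a b q c d : ℝ} (hT : 0 < T) (hXT : Periodic X T)
    (hYT : Periodic Y T) (hX₀ : ∀ t, 0 ≤ X t) (hY₀ : ∀ t, 0 ≤ Y t) (hP : 0 ≤ P) (hq : 0 ≤ q)
    (hc : 0 ≤ c) (hX : ∀ t, HasDerivAt X (P + a * X t + b * (X t * Y t)) t)
    (hY : ∀ t, HasDerivAt Y (q + c * X t + d * (X t * Y t)) t) (t s : ℝ) :
    X t = X s ∧ Y t = Y s := by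
  rcases le_or_gt 0 d with hd | hd
  · have hYc := hYT.eq_of_hasDerivAt_nonneg_Ici hT hY (a := 0) fun t _ =>
      add_nonneg (add_nonneg hq (mul_nonneg hc (hX₀ t)))
        (mul_nonneg hd (mul_nonneg (hX₀ t) (hY₀ t)))
    have hXc := hXT.eq_of_hasDerivAt_affine hT (P := P) (μ := a + b * Y 0) fun t =>
      (hX t).congr_deriv (by rw [hYc t 0]; ring)
    exact ⟨hXc t s, hYc t s⟩
  -- with `K = -d`, the shift `Z = Y - c / K` satisfies `Z' = q - K X Z`
  have hK : 0 < -d := neg_pos.2 hd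
  have h := eq_of_lotkaVolterra (Z := fun t => Y t - c / -d) (e := a + b * (c / -d)) (b := b) hT
    hXT (fun t => by simp only [hYT t]) hX₀ hK hP hq
    (fun t => (hX t).congr_deriv (by ring))
    (fun t => ((hY t).sub_const _).congr_deriv (by have := hd.ne; field_simp; ring)) t s
  exact ⟨h.1, sub_left_inj.1 h.2⟩

theorem IsPeriodicSolution.eq_of_sources_zero_X_XY {A Γ : Matrix (Fin 2) (Fin 3) ℤ}
    {κ : Fin 3 → ℝ} {x : ℝ → Fin 2 → ℝ} {T : ℝ} (hA : A = !![0, 1, 1; 0, 0, 1])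
    (hAΓ : ∀ i j, 0 ≤ A i j + Γ i j) (hκ : ∀ j, 0 < κ j)
    (hx : IsPeriodicSolution (massAction A Γ κ) x T) (t s : ℝ) : x t = x s := by
  subst hA
  have hx' : ∀ i t, HasDerivAt (fun t => x t i) ((Γ i 0 : ℝ) * κ 0 + (Γ i 1 * κ 1) * x t 0
      + (Γ i 2 * κ 2) * (x t 0 * x t 1)) t := fun i t => by
    simpa [massAction, Fin.sum_univ_three, Fin.prod_univ_two] using
      hasDerivAt_pi.1 (hx.hasDerivAt t) i
  have hΓ : ∀ i j, (!![0, 1, 1; 0, 0, 1] : Matrix (Fin 2) (Fin 3) ℤ) i j = 0 →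
      0 ≤ (Γ i j : ℝ) * κ j := fun i j h =>
    mul_nonneg (by exact_mod_cast (by simpa [h] using hAΓ i j : (0 : ℤ) ≤ Γ i j)) (hκ j).le
  have h := eq_of_bilinear hx.pos (hx.periodic.comp (· 0)) (hx.periodic.comp (· 1))
    (fun t => hx.nonneg t 0) (fun t => hx.nonneg t 1) (hΓ 0 0 rfl) (hΓ 1 0 rfl) (hΓ 1 1 rfl)
    (hx' 0) (hx' 1) t s
  funext i
  fin_cases i
  exacts [h.1, h.2]

theorem stmt18_general (A Γ : Matrix (Fin 2) (Fin 3) ℤ)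
    (hAΓ : ∀ i j, 0 ≤ A i j + Γ i j)
    (hsrc : ∃ (σ : Equiv.Perm (Fin 2)) (τ : Equiv.Perm (Fin 3)),
      (∀ i j, A (σ i) (τ j) = (!![0, 1, 0; 0, 0, 1] : Matrix (Fin 2) (Fin 3) ℤ) i j) ∨
      (∀ i j, A (σ i) (τ j) = (!![0, 1, 1; 0, 0, 1] : Matrix (Fin 2) (Fin 3) ℤ) i j) ∨
      (∀ i j, A (σ i) (τ j) = (!![0, 2, 0; 0, 0, 1] : Matrix (Fin 2) (Fin 3) ℤ) i j) ∨
      (∀ i j, A (σ i) (τ j) = (!![1, 2, 0; 0, 0, 1] : Matrix (Fin 2) (Fin 3) ℤ) i j) ∨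
      (∀ i j, A (σ i) (τ j) = (!![0, 2, 0; 0, 0, 2] : Matrix (Fin 2) (Fin 3) ℤ) i j) ∨
      (∀ i j, A (σ i) (τ j) = (!![1, 2, 0; 0, 0, 2] : Matrix (Fin 2) (Fin 3) ℤ) i j))
    (κ : Fin 3 → ℝ) (hκ : ∀ j, 0 < κ j) :
    ¬ ∃ O : Set (Fin 2 → ℝ), IsPeriodicOrbit (massAction A Γ κ) O := by
  rintro ⟨-, x, T, hT, hx₀, hx', hxT, ⟨t, s, hts⟩, -⟩
  obtain ⟨σ, τ, hsrc⟩ := hsrc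
  have hsol := IsPeriodicSolution.comp_perm σ τ ⟨hT, hx₀, hx', hxT⟩
  have hAΓ' : ∀ i j, 0 ≤ A.submatrix σ τ i j + Γ.submatrix σ τ i j :=
    fun i j => hAΓ (σ i) (τ j)
  have hκ' : ∀ j, 0 < (κ ∘ τ) j := fun j => hκ (τ j)
  refine hts (σ.surjective.injective_comp_right ?_)
  rcases hsrc with h | h | h | h | h | h
  on_goal 2 => exact hsol.eq_of_sources_zero_X_XY (Matrix.ext h) hAΓ' hκ' t s
  all_goals
    refine hsol.eq_of_sources_single_species ?_ hAΓ' hκ' t s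
    simp only [Matrix.submatrix_apply, h]
    unfold Pairwise
    decide

/-- A two-species, three-reaction, quadratic mass-action system whose source
complexes form (up to exchanging the two species) one of the six configurations
`{0, X, Y}`, `{0, X, X+Y}`, `{0, 2X, Y}`, `{X, 2X, Y}`, `{0, 2X, 2Y}`,
`{X, 2X, 2Y}` admits no periodic orbit, with arbitrary target complexes. -/
theorem stmt18 (A Γ : Matrix (Fin 2) (Fin 3) ℤ)
    (hA : ∀ i j, 0 ≤ A i j)
    (hAΓ : ∀ i j, 0 ≤ A i j + Γ i j)
    (hquad : ∀ j, (∑ i, A i j) ≤ 2)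
    (hsrc : ∃ (σ : Equiv.Perm (Fin 2)) (τ : Equiv.Perm (Fin 3)),
      (∀ i j, A (σ i) (τ j) = (!![0, 1, 0; 0, 0, 1] : Matrix (Fin 2) (Fin 3) ℤ) i j) ∨
      (∀ i j, A (σ i) (τ j) = (!![0, 1, 1; 0, 0, 1] : Matrix (Fin 2) (Fin 3) ℤ) i j) ∨
      (∀ i j, A (σ i) (τ j) = (!![0, 2, 0; 0, 0, 1] : Matrix (Fin 2) (Fin 3) ℤ) i j) ∨
      (∀ i j, A (σ i) (τ j) = (!![1, 2, 0; 0, 0, 1] : Matrix (Fin 2) (Fin 3) ℤ) i j) ∨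
      (∀ i j, A (σ i) (τ j) = (!![0, 2, 0; 0, 0, 2] : Matrix (Fin 2) (Fin 3) ℤ) i j) ∨
      (∀ i j, A (σ i) (τ j) = (!![1, 2, 0; 0, 0, 2] : Matrix (Fin 2) (Fin 3) ℤ) i j))
    (κ : Fin 3 → ℝ) (hκ : ∀ j, 0 < κ j) :
    ¬ ∃ O : Set (Fin 2 → ℝ), IsPeriodicOrbit (massAction A Γ κ) O :=
  stmt18_general A Γ hAΓ hsrc κ hκ
end
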